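/- arXiv:2506.21515 — 6 statements merged into one kernel-verified Lean document; each statement's English description precedes it below -/
import Mathlib

section
/- Let g be a semi-stable radial H¹ solution of −Δu = |x|^α f(u) in the punctured unit ball. Then for every Lipschitz function v : (0,1) → ℝ with compact support contained in (0,1), one has ∫₀¹ t^{N−1}·g'(t)²·( v'(t)² + α·v'(t)v(t)/t + (1 − N − αN/2)·v(t)²/t² ) dt ≥ 0, where v' denotes the almost-everywhere derivative of v. -/
open MeasureTheory Set
open scoped NNReal ENNReal Topology

/-- `g` is a radial `H¹` solution of `-Δu = |x|^α f(u)` in the punctured unit ball of `ℝ^N`: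
`g` is `C²` on `(0,1]`, satisfies the radial ODE
`g'' + (N-1)/r · g' + r^α f(g) = 0` on `(0,1]`, and `∫₀¹ r^{N-1}(g² + g'²) dr < ∞`. -/
def IsRadialH1Solution (N : ℕ) (α : ℝ) (f g : ℝ → ℝ) : Prop :=
  ContDiffOn ℝ 2 g (Set.Ioc 0 1) ∧
  (∀ r ∈ Set.Ioc (0:ℝ) 1,
    deriv (deriv g) r + ((N : ℝ) - 1) / r * deriv g r + r ^ α * f (g r) = 0) ∧
  MeasureTheory.IntegrableOn
    (fun r : ℝ => r ^ ((N : ℝ) - 1) * ((g r) ^ 2 + (deriv g r) ^ 2)) (Set.Ioc 0 1)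

/-- Semi-stability: for every Lipschitz `φ` with compact support in `(0,1)`,
`∫₀¹ r^{N-1}(φ'² - r^α f'(g) φ²) dr ≥ 0`. -/
def IsSemiStable (N : ℕ) (α : ℝ) (f g : ℝ → ℝ) : Prop :=
  ∀ φ : ℝ → ℝ, (∃ K, LipschitzWith K φ) → HasCompactSupport φ →
    tsupport φ ⊆ Set.Ioo 0 1 →
    0 ≤ ∫ r in Set.Ioo (0:ℝ) 1,
        r ^ ((N : ℝ) - 1) * ((deriv φ r) ^ 2 - r ^ α * deriv f (g r) * (φ r) ^ 2)

section AuxLemmasForKeyInequality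

lemma clamp_dist (a b x y : ℝ) :
    |max a (min x b) - max a (min y b)| ≤ |x - y| := by
  wlog h : x ≤ y generalizing x y
  · rw [abs_sub_comm, abs_sub_comm x y]; exact this _ _ (le_of_not_ge h)
  have h1 : min x b ≤ min y b := min_le_min h le_rfl
  have h2 : min y b - min x b ≤ y - x := by
    rcases le_total y b with hy | hy
    · rw [min_eq_left hy, min_eq_left (h.trans hy)]
    · rcases le_total x b with hx | hx
      · rw [min_eq_right hy, min_eq_left hx]; linarith
      · rw [min_eq_right hy, min_eq_right hx]; linarith
  have h3 : max a (min x b) ≤ max a (min y b) := max_le_max le_rfl h1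
  have h4 : max a (min y b) - max a (min x b) ≤ min y b - min x b := by
    rcases le_total a (min y b) with hy | hy
    · rw [max_eq_right hy]; linarith [le_max_right a (min x b)]
    · rw [max_eq_left hy, max_eq_left (h1.trans hy)]; linarith
  rw [abs_sub_comm, abs_of_nonneg (by linarith), abs_sub_comm, abs_of_nonneg (by linarith)]
  linarith

lemma lipschitzWith_of_zero_outside {f : ℝ → ℝ} {K : ℝ≥0} {a b : ℝ} (hab : a ≤ b)
    (hf : LipschitzOnWith K f (Icc a b)) (h0 : ∀ x, x ∉ Ioo a b → f x = 0) :
    LipschitzWith K f := by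
  have hmem : ∀ x : ℝ, max a (min x b) ∈ Icc a b :=
    fun x => ⟨le_max_left _ _, max_le hab (min_le_right _ _)⟩
  have hproj : ∀ x : ℝ, f x = f (max a (min x b)) := by
    intro x
    rcases lt_or_ge x a with h1 | h1
    · have hmx : min x b = x := min_eq_left (h1.le.trans hab)
      rw [h0 x (by rintro ⟨h2, h3⟩; exact absurd h2 (not_lt.2 h1.le)), hmx,
        max_eq_left h1.le, h0 a (by rintro ⟨h2, h3⟩; exact absurd h2 (lt_irrefl a))]
    · rcases le_or_gt x b with h2 | h2
      · rw [min_eq_left h2, max_eq_right h1]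
      · rw [min_eq_right h2.le, max_eq_right hab,
          h0 x (by rintro ⟨h3, h4⟩; exact absurd h4 (not_lt.2 h2.le)),
          h0 b (by rintro ⟨h3, h4⟩; exact absurd h4 (lt_irrefl b))]
  apply LipschitzWith.of_dist_le_mul
  intro x y
  rw [hproj x, hproj y]
  calc dist (f (max a (min x b))) (f (max a (min y b)))
      ≤ K * dist (max a (min x b)) (max a (min y b)) :=
        hf.dist_le_mul _ (hmem x) _ (hmem y)
    _ ≤ K * dist x y := by
        apply mul_le_mul_of_nonneg_left _ (NNReal.coe_nonneg K)
        rw [Real.dist_eq, Real.dist_eq]; exact clamp_dist a b x y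

lemma lipschitzOnWith_mul {s : Set ℝ} {u w : ℝ → ℝ} {Ku Kw : ℝ≥0} {Mu Mw : ℝ}
    (hu : LipschitzOnWith Ku u s) (hw : LipschitzOnWith Kw w s)
    (hMu : ∀ x ∈ s, |u x| ≤ Mu) (hMw : ∀ x ∈ s, |w x| ≤ Mw) :
    LipschitzOnWith (Real.toNNReal (Mu * Kw + Mw * Ku)) (fun x => u x * w x) s := by
  rw [lipschitzOnWith_iff_dist_le_mul]
  intro x hx y hy
  have h1 : dist (u x) (u y) ≤ Ku * dist x y := hu.dist_le_mul x hx y hy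
  have h2 : dist (w x) (w y) ≤ Kw * dist x y := hw.dist_le_mul x hx y hy
  rw [Real.dist_eq] at h1 h2 ⊢
  have e : u x * w x - u y * w y = u x * (w x - w y) + (u x - u y) * w y := by ring
  have hc : (Real.toNNReal (Mu * Kw + Mw * Ku) : ℝ) = max (Mu * Kw + Mw * Ku) 0 :=
    Real.coe_toNNReal' _
  rw [e, hc]
  calc |u x * (w x - w y) + (u x - u y) * w y|
      ≤ |u x * (w x - w y)| + |(u x - u y) * w y| := abs_add_le _ _
    _ = |u x| * |w x - w y| + |u x - u y| * |w y| := by rw [abs_mul, abs_mul]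
    _ ≤ Mu * (Kw * |x - y|) + (Ku * |x - y|) * Mw := by
        apply add_le_add
        · exact mul_le_mul (hMu x hx) h2 (abs_nonneg _)
            ((abs_nonneg _).trans (hMu x hx))
        · exact mul_le_mul h1 (hMw y hy) (abs_nonneg _)
            (mul_nonneg (NNReal.coe_nonneg _) (abs_nonneg _))
    _ ≤ max (Mu * Kw + Mw * Ku) 0 * dist x y := by
        rw [Real.dist_eq]
        nlinarith [le_max_left (Mu * Kw + Mw * Ku) 0, abs_nonneg (x - y)]

lemma bound_of_compactSupport {v : ℝ → ℝ} (hc : Continuous v) (hs : HasCompactSupport v) :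
    ∃ M : ℝ, 0 ≤ M ∧ ∀ x, |v x| ≤ M := by
  obtain ⟨C, hC⟩ := hs.isCompact.exists_bound_of_continuousOn hc.continuousOn
  refine ⟨max C 0, le_max_right _ _, fun x => ?_⟩
  by_cases hx : x ∈ tsupport v
  · exact le_trans (hC x hx) (le_max_left _ _)
  · rw [image_eq_zero_of_notMem_tsupport hx]; simp

lemma exists_Ioo_subset {s : Set ℝ} (hcs : IsCompact s) (hsub : s ⊆ Ioo 0 1) :
    ∃ a b : ℝ, 0 < a ∧ a < b ∧ b < 1 ∧ s ⊆ Ioo a b := by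
  rcases s.eq_empty_or_nonempty with rfl | hne
  · exact ⟨1/4, 1/2, by norm_num, by norm_num, by norm_num, by simp⟩
  · have h1 : sInf s ∈ s := hcs.sInf_mem hne
    have h2 : sSup s ∈ s := hcs.sSup_mem hne
    have h3 : sInf s ≤ sSup s := le_csSup hcs.bddAbove h1
    refine ⟨sInf s / 2, (sSup s + 1) / 2, by linarith [(hsub h1).1], by
      linarith [(hsub h1).1, (hsub h2).2], by linarith [(hsub h2).2], fun x hx => ?_⟩
    have h4 : sInf s ≤ x := csInf_le hcs.bddBelow hx
    have h5 : x ≤ sSup s := le_csSup hcs.bddAbove hx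
    exact ⟨by linarith [(hsub h1).1], by linarith [(hsub h2).2]⟩

lemma integral_deriv_le_of_monotone {f : ℝ → ℝ} (hm : Monotone f) (hc : Continuous f)
    {a b : ℝ} (hab : a ≤ b) : ∫ x in Ioc a b, deriv f x ≤ f b - f a := by
  set μ := hm.stieltjesFunction.measure with hμ
  have hS : ∀ x, hm.stieltjesFunction x = f x := by
    intro x
    rw [hm.stieltjesFunction_eq]
    exact rightLim_eq_of_tendsto
      ((hc.tendsto x).mono_left nhdsWithin_le_nhds)
  have hae : ∀ᵐ x, deriv f x = (μ.rnDeriv volume x).toReal :=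
    hm.ae_hasDerivAt.mono fun x hx => hx.deriv
  have hIoc : μ (Ioc a b) = ENNReal.ofReal (f b - f a) := by
    rw [hμ, StieltjesFunction.measure_Ioc, hS, hS]
  calc ∫ x in Ioc a b, deriv f x
      = ∫ x in Ioc a b, (μ.rnDeriv volume x).toReal := by
        exact integral_congr_ae (ae_restrict_of_ae hae)
    _ ≤ (μ (Ioc a b)).toReal := by
        apply Measure.setIntegral_toReal_rnDeriv_le
        rw [hIoc]; exact ENNReal.ofReal_ne_top
    _ = f b - f a := by
        rw [hIoc, ENNReal.toReal_ofReal (sub_nonneg.2 (hm hab))]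

lemma integral_deriv_eq_of_lipschitz {f : ℝ → ℝ} {K : ℝ≥0} (hf : LipschitzWith K f)
    {a b : ℝ} (hab : a ≤ b) : ∫ x in Ioc a b, deriv f x = f b - f a := by
  have hdm : Measurable (deriv f) := measurable_deriv f
  have hbd : ∀ x, ‖deriv f x‖ ≤ (K : ℝ) := fun x => norm_deriv_le_of_lipschitz hf
  have hfin : volume (Ioc a b) ≠ ⊤ := (measure_Ioc_lt_top).ne
  have hint : IntegrableOn (deriv f) (Ioc a b) :=
    Measure.integrableOn_of_bounded hfin hdm.aestronglyMeasurable
      (ae_of_all _ fun x => hbd x)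
  have hKint : IntegrableOn (fun _ : ℝ => (K : ℝ)) (Ioc a b) :=
    integrableOn_const hfin
  have hconst : ∫ _ in Ioc a b, (K : ℝ) = K * (b - a) := by
    rw [setIntegral_const, Real.volume_real_Ioc_of_le hab,
      smul_eq_mul, mul_comm]
  have hLip : ∀ x y : ℝ, x ≤ y → f x - f y ≤ K * (y - x) := by
    intro x y hxy
    have h : |f x - f y| ≤ (K : ℝ) * (y - x) := by
      calc |f x - f y| = dist (f x) (f y) := (Real.dist_eq _ _).symm
        _ ≤ K * dist x y := hf.dist_le_mul x y
        _ = K * (y - x) := by rw [Real.dist_eq, abs_sub_comm, abs_of_nonneg (by linarith)]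
    linarith [le_abs_self (f x - f y)]
  -- monotone companions
  have h1 : Monotone (fun x => (K : ℝ) * x + f x) := by
    intro x y hxy
    have := hLip x y hxy
    simp only; linarith
  have h2 : Monotone (fun x => (K : ℝ) * x - f x) := by
    intro x y hxy
    have := hLip y x; simp only
    have h' : f y - f x ≤ K * (y - x) := by
      calc f y - f x ≤ |f y - f x| := le_abs_self _
        _ = dist (f y) (f x) := (Real.dist_eq _ _).symm
        _ ≤ K * dist y x := hf.dist_le_mul y x
        _ = K * (y - x) := by rw [Real.dist_eq, abs_of_nonneg (by linarith)]
    linarith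
  have hc1 : Continuous (fun x => (K : ℝ) * x + f x) :=
    (continuous_const.mul continuous_id).add hf.continuous
  have hc2 : Continuous (fun x => (K : ℝ) * x - f x) :=
    (continuous_const.mul continuous_id).sub hf.continuous
  have hae1 : ∀ᵐ x, deriv (fun y => (K : ℝ) * y + f y) x = (K : ℝ) + deriv f x := by
    filter_upwards [hf.ae_differentiableAt (μ := volume)] with x hx
    have : HasDerivAt (fun y => (K : ℝ) * y + f y) ((K : ℝ) * 1 + deriv f x) x :=
      ((hasDerivAt_id x).const_mul (K : ℝ)).add hx.hasDerivAt
    simpa using this.deriv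
  have hae2 : ∀ᵐ x, deriv (fun y => (K : ℝ) * y - f y) x = (K : ℝ) - deriv f x := by
    filter_upwards [hf.ae_differentiableAt (μ := volume)] with x hx
    have : HasDerivAt (fun y => (K : ℝ) * y - f y) ((K : ℝ) * 1 - deriv f x) x :=
      ((hasDerivAt_id x).const_mul (K : ℝ)).sub hx.hasDerivAt
    simpa using this.deriv
  have I1 : ∫ x in Ioc a b, ((K : ℝ) + deriv f x) ≤ ((K : ℝ) * b + f b) - ((K : ℝ) * a + f a) := by
    calc ∫ x in Ioc a b, ((K : ℝ) + deriv f x)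
        = ∫ x in Ioc a b, deriv (fun y => (K : ℝ) * y + f y) x :=
          (integral_congr_ae (ae_restrict_of_ae hae1)).symm
      _ ≤ _ := integral_deriv_le_of_monotone h1 hc1 hab
  have I2 : ∫ x in Ioc a b, ((K : ℝ) - deriv f x) ≤ ((K : ℝ) * b - f b) - ((K : ℝ) * a - f a) := by
    calc ∫ x in Ioc a b, ((K : ℝ) - deriv f x)
        = ∫ x in Ioc a b, deriv (fun y => (K : ℝ) * y - f y) x :=
          (integral_congr_ae (ae_restrict_of_ae hae2)).symm
      _ ≤ _ := integral_deriv_le_of_monotone h2 hc2 hab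
  rw [integral_add hKint hint, hconst] at I1
  rw [integral_sub hKint hint, hconst] at I2
  linarith

lemma lipschitzOnWith_of_contDiffOn {u : ℝ → ℝ} {a b : ℝ} (hab : a ≤ b)
    (hu : ContDiffOn ℝ 1 u (Ioo 0 1)) (hIcc : Icc a b ⊆ Ioo (0:ℝ) 1) :
    ∃ Cu : ℝ, 0 ≤ Cu ∧ LipschitzOnWith (Real.toNNReal Cu) u (Icc a b) := by
  have hud : ∀ x ∈ Icc a b, HasDerivWithinAt u (deriv u x) (Icc a b) x := fun x hx =>
    (((hu.differentiableOn one_ne_zero).differentiableAt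
      (isOpen_Ioo.mem_nhds (hIcc hx))).hasDerivAt).hasDerivWithinAt
  have hcd : ContinuousOn (deriv u) (Icc a b) :=
    (hu.continuousOn_deriv_of_isOpen isOpen_Ioo le_rfl).mono hIcc
  obtain ⟨Cu, hCu⟩ := isCompact_Icc.exists_bound_of_continuousOn hcd
  have hCu0 : 0 ≤ Cu := le_trans (norm_nonneg _) (hCu a ⟨le_rfl, hab⟩)
  refine ⟨Cu, hCu0, ?_⟩
  rw [lipschitzOnWith_iff_dist_le_mul]
  intro x hx y hy
  rw [Real.dist_eq, Real.dist_eq]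
  have := Convex.norm_image_sub_le_of_norm_hasDerivWithin_le hud hCu (convex_Icc a b) hy hx
  rw [Real.norm_eq_abs, Real.norm_eq_abs] at this
  calc |u x - u y| ≤ Cu * |x - y| := this
    _ ≤ (Real.toNNReal Cu : ℝ) * |x - y| := by
        apply mul_le_mul_of_nonneg_right _ (abs_nonneg _)
        rw [Real.coe_toNNReal']; exact le_max_left _ _

lemma exists_lipschitz_mul {u w : ℝ → ℝ} {Kw : ℝ≥0} {a b : ℝ}
    (ha : 0 < a) (hab : a < b) (hb : b < 1)
    (hu : ContDiffOn ℝ 1 u (Ioo 0 1)) (hwl : LipschitzWith Kw w) (hwc : HasCompactSupport w)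
    (hsupp : tsupport w ⊆ Ioo a b) :
    ∃ K : ℝ≥0, LipschitzWith K (fun t => u t * w t) := by
  have hIcc : Icc a b ⊆ Ioo (0:ℝ) 1 := fun x hx =>
    ⟨lt_of_lt_of_le ha hx.1, lt_of_le_of_lt hx.2 hb⟩
  obtain ⟨Cu, hCu0, hulip⟩ := lipschitzOnWith_of_contDiffOn hab.le hu hIcc
  obtain ⟨Mu, hMu⟩ := isCompact_Icc.exists_bound_of_continuousOn (hu.continuousOn.mono hIcc)
  obtain ⟨Mw, hMw0, hMw⟩ := bound_of_compactSupport hwl.continuous hwc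
  have hprod : LipschitzOnWith _ (fun t => u t * w t) (Icc a b) :=
    lipschitzOnWith_mul hulip (LipschitzWith.lipschitzOnWith hwl (s := Icc a b))
      (fun x hx => by rw [← Real.norm_eq_abs]; exact hMu x hx) (fun x _ => hMw x)
  refine ⟨_, lipschitzWith_of_zero_outside hab.le hprod fun x hx => ?_⟩
  rw [image_eq_zero_of_notMem_tsupport fun hm => hx (hsupp hm), mul_zero]

end AuxLemmasForKeyInequality

/-- First step of the key lemma: for any Lipschitz `v` with compact support in `(0,1)`,
`∫₀¹ t^{N-1} g'(t)² (v'² + α v'v/t + (1 - N - αN/2) v²/t²) dt ≥ 0`. -/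
theorem key_inequality_compact_support (N : ℕ) (α : ℝ) (hN : 2 ≤ N) (hα : -2 < α)
    (f g : ℝ → ℝ) (hf : ContDiff ℝ 1 f) (hsol : IsRadialH1Solution N α f g)
    (hstab : IsSemiStable N α f g)
    (v : ℝ → ℝ) (hv : ∃ K, LipschitzWith K v) (hvsupp : HasCompactSupport v)
    (hvsub : tsupport v ⊆ Set.Ioo 0 1) :
    0 ≤ ∫ t in Set.Ioo (0:ℝ) 1,
        t ^ ((N : ℝ) - 1) * (deriv g t) ^ 2 *
          ((deriv v t) ^ 2 + α * (deriv v t * v t) / t +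
            (1 - (N : ℝ) - α * (N : ℝ) / 2) * (v t) ^ 2 / t ^ 2) := by
  obtain ⟨Kv, hKv⟩ := hv
  obtain ⟨hg2, hode, -⟩ := hsol
  obtain ⟨a, b, ha, hab, hb1, hvab⟩ := exists_Ioo_subset hvsupp hvsub
  set c : ℝ := (N : ℝ) - 1 with hcdef
  have hN2 : (2:ℝ) ≤ (N:ℝ) := by exact_mod_cast hN
  have hc0 : 0 ≤ c := by rw [hcdef]; linarith
  have hU : IsOpen (Ioo (0:ℝ) 1) := isOpen_Ioo
  have hUsub : Ioo (0:ℝ) 1 ⊆ Ioc 0 1 := Ioo_subset_Ioc_self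
  have hg2' : ContDiffOn ℝ 2 g (Ioo 0 1) := hg2.mono hUsub
  have hp : ContDiffOn ℝ 1 (deriv g) (Ioo 0 1) := hg2'.deriv_of_isOpen hU (by norm_num)
  have hgd : ∀ t ∈ Ioo (0:ℝ) 1, HasDerivAt g (deriv g t) t := fun t ht =>
    ((hg2'.differentiableOn (by norm_num)).differentiableAt (hU.mem_nhds ht)).hasDerivAt
  have hpd : ∀ t ∈ Ioo (0:ℝ) 1, HasDerivAt (deriv g) (deriv (deriv g) t) t := fun t ht =>
    ((hp.differentiableOn one_ne_zero).differentiableAt (hU.mem_nhds ht)).hasDerivAt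
  have hode' : ∀ t ∈ Ioo (0:ℝ) 1,
      deriv (deriv g) t = -(c * (t⁻¹ * deriv g t)) - t ^ α * f (g t) := by
    intro t ht
    have h0 := hode t (hUsub ht)
    have ht0 : t ≠ 0 := ne_of_gt ht.1
    have h1 : ((N:ℝ) - 1) / t * deriv g t = c * (t⁻¹ * deriv g t) := by
      rw [hcdef, div_eq_mul_inv]; ring
    linarith [h0]
  have hfd : ∀ y : ℝ, HasDerivAt f (deriv f y) y := fun y =>
    (hf.differentiable one_ne_zero y).hasDerivAt
  have hfg : ContDiffOn ℝ 1 (fun t => f (g t)) (Ioo 0 1) :=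
    hf.comp_contDiffOn (hg2'.of_le one_le_two)
  have hrpowc : ∀ (γ : ℝ), ContDiffOn ℝ 1 (fun t : ℝ => t ^ γ) (Ioo 0 1) := fun γ t ht =>
    (Real.contDiffAt_rpow_const_of_ne (ne_of_gt ht.1)).contDiffWithinAt
  have hinvC : ContDiffOn ℝ 1 (fun t : ℝ => t⁻¹) (Ioo 0 1) :=
    contDiffOn_id.inv fun t ht => ne_of_gt ht.1
  have hqC1 : ContDiffOn ℝ 1 (deriv (deriv g)) (Ioo 0 1) := by
    apply ContDiffOn.congr _ hode'
    exact (contDiffOn_const.mul (hinvC.mul hp)).neg.sub ((hrpowc α).mul hfg)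
  -- test function φ
  set φ : ℝ → ℝ := fun t => deriv g t * v t with hφdef
  obtain ⟨Kφ, hφlip⟩ : ∃ K : ℝ≥0, LipschitzWith K φ :=
    exists_lipschitz_mul ha hab hb1 hp hKv hvsupp hvab
  have hφsupp : tsupport φ ⊆ tsupport v := by
    apply closure_mono
    intro x hx
    simp only [Function.mem_support, hφdef] at hx ⊢
    intro h0; exact hx (by rw [h0, mul_zero])
  have hφcs : HasCompactSupport φ :=
    IsCompact.of_isClosed_subset hvsupp isClosed_closure hφsupp
  have hφsub : tsupport φ ⊆ Ioo 0 1 := hφsupp.trans hvsub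
  -- the boundary-term function W
  set W : ℝ → ℝ := fun r => r ^ c * (deriv g r * (deriv (deriv g) r * (v r * v r)))
      - α / 2 * (r ^ (c - 1) * (deriv g r * deriv g r * (v r * v r))) with hWdef
  obtain ⟨Mv, hMv0, hMv⟩ := bound_of_compactSupport hKv.continuous hvsupp
  have hvvsub : tsupport (fun t => v t * v t) ⊆ tsupport v := by
    apply closure_mono
    intro x hx
    simp only [Function.mem_support] at hx ⊢
    intro h0; exact hx (by rw [h0, mul_zero])
  obtain ⟨K2, hK2⟩ : ∃ K2 : ℝ≥0, LipschitzWith K2 (fun t => v t * v t) :=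
    ⟨_, lipschitzOnWith_univ.mp (lipschitzOnWith_mul
      (LipschitzWith.lipschitzOnWith hKv (s := univ)) (LipschitzWith.lipschitzOnWith hKv (s := univ))
      (fun x _ => hMv x) (fun x _ => hMv x))⟩
  have hvvcs : HasCompactSupport (fun t => v t * v t) :=
    IsCompact.of_isClosed_subset hvsupp isClosed_closure hvvsub
  have huW : ContDiffOn ℝ 1 (fun r => r ^ c * (deriv g r * deriv (deriv g) r)
      - α / 2 * (r ^ (c-1) * (deriv g r * deriv g r))) (Ioo 0 1) :=
    ((hrpowc c).mul (hp.mul hqC1)).sub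
      (contDiffOn_const.mul ((hrpowc (c-1)).mul (hp.mul hp)))
  obtain ⟨KW, hKW⟩ : ∃ K : ℝ≥0, LipschitzWith K W := by
    obtain ⟨K, hK⟩ := exists_lipschitz_mul ha hab hb1 huW hK2 hvvcs (hvvsub.trans hvab)
    refine ⟨K, ?_⟩
    have hWe : W = fun t => (t ^ c * (deriv g t * deriv (deriv g) t)
        - α / 2 * (t ^ (c-1) * (deriv g t * deriv g t))) * (v t * v t) := by
      funext t; simp only [hWdef]; ring
    rw [hWe]; exact hK
  have hWzero : ∀ x, x ∉ tsupport v → W x = 0 := fun x hx => by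
    simp only [hWdef, image_eq_zero_of_notMem_tsupport hx]; ring
  have hdWzero : ∀ x, x ∉ tsupport v → deriv W x = 0 := by
    intro x hx
    have hev : W =ᶠ[𝓝 x] (fun _ => (0:ℝ)) :=
      Filter.eventually_of_mem ((isClosed_tsupport v).isOpen_compl.mem_nhds hx)
        fun y hy => hWzero y hy
    rw [hev.deriv_eq]; exact deriv_const x 0
  -- the pointwise a.e. identity
  have hae : (fun r => r ^ c * ((deriv φ r) ^ 2 - r ^ α * deriv f (g r) * (φ r) ^ 2))
      =ᵐ[volume.restrict (Ioo (0:ℝ) 1)]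
      (fun t => t ^ c * (deriv g t) ^ 2 *
          ((deriv v t) ^ 2 + α * (deriv v t * v t) / t +
            (1 - (N : ℝ) - α * (N : ℝ) / 2) * (v t) ^ 2 / t ^ 2) + deriv W t) := by
    filter_upwards [ae_restrict_mem measurableSet_Ioo,
      ae_restrict_of_ae (hKv.ae_differentiableAt (μ := volume))] with t ht hvd
    have ht0 : (0:ℝ) < t := ht.1
    have htne : t ≠ 0 := ne_of_gt ht0
    have hY0 : t ^ α ≠ 0 := (Real.rpow_pos_of_pos ht0 α).ne'
    have hv' : HasDerivAt v (deriv v t) t := hvd.hasDerivAt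
    have hp' : HasDerivAt (deriv g) (deriv (deriv g) t) t := hpd t ht
    have hg' : HasDerivAt g (deriv g t) t := hgd t ht
    have hinv' : HasDerivAt (fun r : ℝ => r⁻¹) (-(t^2)⁻¹) t := hasDerivAt_inv htne
    have hfg' : HasDerivAt (fun r => f (g r)) (deriv f (g t) * deriv g t) t := by
      have := (hfd (g t)).comp t hg'
      exact this
    have hrpα : HasDerivAt (fun r : ℝ => r ^ α) (α * t ^ (α - 1)) t :=
      Real.hasDerivAt_rpow_const (Or.inl htne)
    have hS' := ((((hinv'.mul hp').const_mul c).neg).sub (hrpα.mul hfg')).congr_of_eventuallyEq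
      (Filter.eventually_of_mem (hU.mem_nhds ht) fun y hy => hode' y hy)
    have eF : f (g t) = (-(deriv (deriv g) t) - c * (t⁻¹ * deriv g t)) / t ^ α := by
      rw [eq_div_iff hY0]; linear_combination hode' t ht
    have hφ' : HasDerivAt φ (deriv (deriv g) t * v t + deriv g t * deriv v t) t := by
      rw [hφdef]; exact hp'.mul hv'
    have hrc : HasDerivAt (fun r : ℝ => r ^ c) (c * t ^ (c - 1)) t :=
      Real.hasDerivAt_rpow_const (Or.inl htne)
    have hrc1 : HasDerivAt (fun r : ℝ => r ^ (c-1)) ((c-1) * t ^ (c - 1 - 1)) t :=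
      Real.hasDerivAt_rpow_const (Or.inl htne)
    have hvv' : HasDerivAt (fun r => v r * v r) (deriv v t * v t + v t * deriv v t) t :=
      hv'.mul hv'
    have hW2 := (hrc.mul (hp'.mul (hS'.mul hvv'))).sub
        ((hrc1.mul ((hp'.mul hp').mul hvv')).const_mul (α/2))
    have eφ := hφ'.deriv
    rw [eφ]
    simp only [hφdef, hWdef]
    rw [(show HasDerivAt (fun r => r ^ c * (deriv g r * (deriv (deriv g) r * (v r * v r)))
        - α / 2 * (r ^ (c - 1) * (deriv g r * deriv g r * (v r * v r)))) _ t from hW2).deriv, eF]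
    simp only [Pi.mul_apply]
    have hs2 : t ^ (c - 1 - 1) = t ^ c / t / t := by
      rw [Real.rpow_sub ht0, Real.rpow_sub ht0, Real.rpow_one]
    have hs1 : t ^ (c - 1) = t ^ c / t := by rw [Real.rpow_sub ht0, Real.rpow_one]
    have hs3 : t ^ (α - 1) = t ^ α / t := by rw [Real.rpow_sub ht0, Real.rpow_one]
    rw [hs2, hs1, hs3, hcdef]
    field_simp
    ring
  -- integrability of the target integrand
  have hIccU : Icc a b ⊆ Ioo (0:ℝ) 1 := fun x hx =>
    ⟨lt_of_lt_of_le ha hx.1, lt_of_le_of_lt hx.2 hb1⟩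
  obtain ⟨Mp, hMp⟩ := isCompact_Icc.exists_bound_of_continuousOn (hp.continuousOn.mono hIccU)
  have hMp0 : 0 ≤ Mp := le_trans (norm_nonneg _) (hMp a ⟨le_rfl, hab.le⟩)
  set C0 : ℝ := Mp^2 * ((Kv:ℝ)^2 + |α| * ((Kv:ℝ) * Mv) / a
      + |1 - (N:ℝ) - α * (N:ℝ)/2| * Mv^2 / a^2) with hC0def
  have hC00 : 0 ≤ C0 := by rw [hC0def]; positivity
  have hTbound : ∀ t ∈ Ioo (0:ℝ) 1,
      ‖t ^ c * (deriv g t) ^ 2 * ((deriv v t) ^ 2 + α * (deriv v t * v t) / t +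
        (1 - (N : ℝ) - α * (N : ℝ) / 2) * (v t) ^ 2 / t ^ 2)‖ ≤ C0 := by
    intro t ht
    by_cases hts : t ∈ tsupport v
    · have htab : t ∈ Icc a b := ⟨(hvab hts).1.le, (hvab hts).2.le⟩
      have hta : a ≤ t := htab.1
      have h1 : |t ^ c| ≤ 1 := by
        rw [abs_of_nonneg (Real.rpow_nonneg ht.1.le c)]
        exact Real.rpow_le_one ht.1.le ht.2.le hc0
      have h2 : |deriv v t| ≤ (Kv:ℝ) := by
        rw [← Real.norm_eq_abs]; exact norm_deriv_le_of_lipschitz hKv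
      have h3 : |v t| ≤ Mv := hMv t
      have h4 : |deriv g t| ≤ Mp := by rw [← Real.norm_eq_abs]; exact hMp t htab
      have i1 : |(deriv v t)^2| ≤ (Kv:ℝ)^2 := by
        rw [abs_pow]; exact pow_le_pow_left₀ (abs_nonneg _) h2 2
      have i2 : |α * (deriv v t * v t) / t| ≤ |α| * ((Kv:ℝ) * Mv) / a := by
        rw [abs_div, abs_mul, abs_mul]
        apply div_le_div₀ (by positivity) ?_ ha ?_
        · exact mul_le_mul le_rfl
            (mul_le_mul h2 h3 (abs_nonneg _) (NNReal.coe_nonneg Kv)) (by positivity)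
            (abs_nonneg α)
        · rw [abs_of_pos ht.1]; exact hta
      have i3 : |(1 - (N:ℝ) - α * (N:ℝ)/2) * (v t)^2 / t^2|
          ≤ |1 - (N:ℝ) - α * (N:ℝ)/2| * Mv^2 / a^2 := by
        rw [abs_div, abs_mul]
        apply div_le_div₀ (by positivity) ?_ (by positivity) ?_
        · exact mul_le_mul le_rfl
            (by rw [abs_pow]; exact pow_le_pow_left₀ (abs_nonneg _) h3 2)
            (abs_nonneg _) (abs_nonneg _)
        · rw [abs_pow, abs_of_pos ht.1]; exact pow_le_pow_left₀ ha.le hta 2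
      have inner : |(deriv v t)^2 + α * (deriv v t * v t) / t +
          (1 - (N:ℝ) - α * (N:ℝ)/2) * (v t)^2 / t^2|
          ≤ (Kv:ℝ)^2 + |α| * ((Kv:ℝ) * Mv)/a + |1 - (N:ℝ) - α * (N:ℝ)/2| * Mv^2/a^2 := by
        calc |(deriv v t)^2 + α * (deriv v t * v t) / t +
            (1 - (N:ℝ) - α * (N:ℝ)/2) * (v t)^2 / t^2|
            ≤ |(deriv v t)^2 + α * (deriv v t * v t) / t|
              + |(1 - (N:ℝ) - α * (N:ℝ)/2) * (v t)^2 / t^2| := abs_add_le _ _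
          _ ≤ (|(deriv v t)^2| + |α * (deriv v t * v t) / t|)
              + |(1 - (N:ℝ) - α * (N:ℝ)/2) * (v t)^2 / t^2| := by
              exact add_le_add (abs_add_le _ _) le_rfl
          _ ≤ _ := by exact add_le_add (add_le_add i1 i2) i3
      rw [Real.norm_eq_abs, abs_mul, abs_mul, hC0def]
      calc |t ^ c| * |(deriv g t)^2| * |(deriv v t)^2 + α * (deriv v t * v t) / t +
            (1 - (N:ℝ) - α * (N:ℝ)/2) * (v t)^2 / t^2|
          ≤ 1 * Mp^2 * ((Kv:ℝ)^2 + |α| * ((Kv:ℝ) * Mv)/a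
            + |1 - (N:ℝ) - α * (N:ℝ)/2| * Mv^2/a^2) := by
            apply mul_le_mul _ inner (abs_nonneg _) (by positivity)
            exact mul_le_mul h1
              (by rw [abs_pow]; exact pow_le_pow_left₀ (abs_nonneg _) h4 2)
              (abs_nonneg _) zero_le_one
        _ = _ := by ring
    · have hv0 : v t = 0 := image_eq_zero_of_notMem_tsupport hts
      have hdv0 : deriv v t = 0 := by
        have hev : v =ᶠ[𝓝 t] (fun _ => (0:ℝ)) :=
          Filter.eventually_of_mem ((isClosed_tsupport v).isOpen_compl.mem_nhds hts)
            fun y hy => image_eq_zero_of_notMem_tsupport hy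
        rw [hev.deriv_eq]; exact deriv_const t 0
      rw [hv0, hdv0]
      have hz : t ^ c * (deriv g t)^2 * ((0:ℝ)^2 + α * ((0:ℝ) * 0) / t +
          (1 - (N:ℝ) - α * (N:ℝ)/2) * (0:ℝ)^2 / t^2) = 0 := by ring
      rw [hz, norm_zero]; exact hC00
  have hTmeas : Measurable (fun t : ℝ => t ^ c * (deriv g t) ^ 2 *
      ((deriv v t) ^ 2 + α * (deriv v t * v t) / t +
        (1 - (N : ℝ) - α * (N : ℝ) / 2) * (v t) ^ 2 / t ^ 2)) := by
    have m1 : Measurable (fun t : ℝ => t ^ c) :=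
      (Real.continuous_rpow_const hc0).measurable
    have m2 : Measurable (deriv g) := measurable_deriv g
    have m3 : Measurable (deriv v) := measurable_deriv v
    have m4 : Measurable v := hKv.continuous.measurable
    exact (m1.mul (m2.pow_const 2)).mul
      (((m3.pow_const 2).add ((measurable_const.mul (m3.mul m4)).div measurable_id)).add
        (((measurable_const.mul (m4.pow_const 2))).div (measurable_id.pow_const 2)))
  have hTint : IntegrableOn (fun t : ℝ => t ^ c * (deriv g t) ^ 2 *
      ((deriv v t) ^ 2 + α * (deriv v t * v t) / t +
        (1 - (N : ℝ) - α * (N : ℝ) / 2) * (v t) ^ 2 / t ^ 2)) (Ioo (0:ℝ) 1) :=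
    Measure.integrableOn_of_bounded (measure_Ioo_lt_top).ne hTmeas.aestronglyMeasurable
      ((ae_restrict_mem measurableSet_Ioo).mono fun t ht => hTbound t ht)
  have hWint : IntegrableOn (deriv W) (Ioo (0:ℝ) 1) :=
    Measure.integrableOn_of_bounded (measure_Ioo_lt_top).ne
      (measurable_deriv W).aestronglyMeasurable
      (ae_of_all _ fun x => norm_deriv_le_of_lipschitz hKW)
  -- assembly
  have hQ := hstab φ ⟨Kφ, hφlip⟩ hφcs hφsub
  rw [← hcdef] at hQ
  have hcongr : ∫ r in Ioo (0:ℝ) 1, r ^ c * ((deriv φ r) ^ 2 - r ^ α * deriv f (g r) * (φ r) ^ 2)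
      = ∫ t in Ioo (0:ℝ) 1, (t ^ c * (deriv g t) ^ 2 *
          ((deriv v t) ^ 2 + α * (deriv v t * v t) / t +
            (1 - (N : ℝ) - α * (N : ℝ) / 2) * (v t) ^ 2 / t ^ 2) + deriv W t) :=
    integral_congr_ae hae
  have hadd : ∫ t in Ioo (0:ℝ) 1, (t ^ c * (deriv g t) ^ 2 *
          ((deriv v t) ^ 2 + α * (deriv v t * v t) / t +
            (1 - (N : ℝ) - α * (N : ℝ) / 2) * (v t) ^ 2 / t ^ 2) + deriv W t)
      = (∫ t in Ioo (0:ℝ) 1, t ^ c * (deriv g t) ^ 2 *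
          ((deriv v t) ^ 2 + α * (deriv v t * v t) / t +
            (1 - (N : ℝ) - α * (N : ℝ) / 2) * (v t) ^ 2 / t ^ 2))
        + ∫ t in Ioo (0:ℝ) 1, deriv W t :=
    integral_add hTint hWint
  have hIocsub : Ioc a b ⊆ Ioo (0:ℝ) 1 := fun x hx =>
    ⟨lt_trans ha hx.1, lt_of_le_of_lt hx.2 hb1⟩
  have hWzero_int : ∫ t in Ioo (0:ℝ) 1, deriv W t = 0 := by
    have h5 : ∫ t in Ioo (0:ℝ) 1, deriv W t = ∫ t in Ioc a b, deriv W t :=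
      setIntegral_eq_of_subset_of_forall_diff_eq_zero measurableSet_Ioo hIocsub
        (fun x hx => hdWzero x fun hm => hx.2 (Ioo_subset_Ioc_self (hvab hm)))
    have h6 : ∫ t in Ioc a b, deriv W t = W b - W a :=
      integral_deriv_eq_of_lipschitz hKW hab.le
    have h7 : W b = 0 := hWzero b fun hm => absurd (hvab hm).2 (lt_irrefl b)
    have h8 : W a = 0 := hWzero a fun hm => absurd (hvab hm).1 (lt_irrefl a)
    rw [h5, h6, h7, h8]; ring
  rw [hcongr, hadd, hWzero_int, add_zero] at hQ
  exact hQ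
end

section
/- Suppose N = 10 + 4α (so α = (N−10)/4 and N ≥ 3). Let f(t) := (N−2)·e^{(2+α)t}. Then g(r) := −log r is an unbounded semi-stable radial H¹ solution of −Δu = |x|^α f(u) in the punctured unit ball; moreover r^α·f'(g(r)) = (N−2)²/(4r²) for all r ∈ (0,1], so the semi-stability inequality holds with exactly the optimal Hardy constant. -/
open MeasureTheory Set Filter Topology NNReal

lemma lipschitz_ftc {h : ℝ → ℝ} {K : ℝ≥0} (hl : LipschitzWith K h)
    (hc : HasCompactSupport h) : ∫ x : ℝ, deriv h x = 0 := by
  have hcont : Continuous h := hl.continuous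
  have hint : Integrable h := hcont.integrable_of_hasCompactSupport hc
  obtain ⟨R, hR⟩ := hc.isBounded.subset_closedBall 0
  set F : ℕ → ℝ → ℝ := fun n x => ((n : ℝ) + 1) * (h (x + 1 / ((n:ℝ)+1)) - h x) with hF
  have htpos : ∀ n : ℕ, (0:ℝ) < 1 / ((n:ℝ)+1) := by
    intro n; positivity
  have htle : ∀ n : ℕ, (1:ℝ) / ((n:ℝ)+1) ≤ 1 := by
    intro n
    rw [div_le_one (by positivity)]
    simp [Nat.cast_nonneg]
  have hshift : ∀ c : ℝ, Integrable (fun x => h (x + c)) := by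
    intro c
    refine (hcont.comp (continuous_add_right c)).integrable_of_hasCompactSupport ?_
    exact hc.comp_isClosedEmbedding (Homeomorph.addRight c).isClosedEmbedding
  have hFint : ∀ n, Integrable (F n) := fun n =>
    (((hshift _).sub hint).const_mul _)
  have hFzero : ∀ n, ∫ x, F n x = 0 := by
    intro n
    rw [hF]
    simp only [integral_const_mul, integral_sub (hshift _) hint]
    rw [integral_add_right_eq_self h]
    ring
  set G : ℝ → ℝ := (Icc (-R-1) (R+1)).indicator (fun _ => (K:ℝ)) with hG
  have hGint : Integrable G := by
    rw [hG, integrable_indicator_iff measurableSet_Icc]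
    exact integrableOn_const measure_Icc_lt_top.ne
  have hbound : ∀ n, ∀ᵐ x : ℝ, ‖F n x‖ ≤ G x := by
    intro n
    refine Eventually.of_forall fun x => ?_
    by_cases hx : x ∈ Icc (-R-1) (R+1)
    · rw [hG, indicator_of_mem hx]
      have hd : dist (h (x + 1/((n:ℝ)+1))) (h x) ≤ K * (1/((n:ℝ)+1)) := by
        have := hl.dist_le_mul (x + 1/((n:ℝ)+1)) x
        simpa [Real.dist_eq, abs_of_pos (htpos n), abs_of_pos (show (0:ℝ) < (n:ℝ)+1 by positivity)] using this
      rw [Real.norm_eq_abs, hF, abs_mul, abs_of_pos (by positivity : (0:ℝ) < (n:ℝ)+1)]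
      rw [Real.dist_eq] at hd
      calc ((n:ℝ)+1) * |h (x + 1/((n:ℝ)+1)) - h x| ≤ ((n:ℝ)+1) * ((K:ℝ) * (1/((n:ℝ)+1))) := by
            exact mul_le_mul_of_nonneg_left hd (by positivity)
        _ = (K:ℝ) := by field_simp
    · rw [hG, indicator_of_notMem hx]
      have hnot : ∀ y : ℝ, y ∉ Icc (-R) R → h y = 0 := by
        intro y hy
        apply image_eq_zero_of_notMem_tsupport
        intro hmem
        exact hy (by simpa [Real.closedBall_eq_Icc, zero_add, zero_sub] using hR hmem)
      simp only [mem_Icc, not_and_or, not_le] at hx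
      have h1 : h x = 0 := by
        apply hnot; simp only [mem_Icc, not_and_or, not_le]
        rcases hx with hx | hx
        · left; linarith
        · right; linarith
      have h2 : h (x + 1/((n:ℝ)+1)) = 0 := by
        apply hnot; simp only [mem_Icc, not_and_or, not_le]
        rcases hx with hx | hx
        · left; have := htpos n; have := htle n; linarith
        · right; have := htpos n; have := htle n; linarith
      show ‖((n:ℝ)+1) * (h (x + 1/((n:ℝ)+1)) - h x)‖ ≤ 0
      rw [h1, h2]; simp
  have hconv : ∀ᵐ x : ℝ, Tendsto (fun n => F n x) atTop (𝓝 (deriv h x)) := by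
    filter_upwards [hl.ae_differentiableAt (μ := volume)] with x hx
    have hd := hx.hasDerivAt.tendsto_slope_zero
    have hseq : Tendsto (fun n : ℕ => 1 / ((n:ℝ)+1)) atTop (𝓝[≠] (0:ℝ)) := by
      rw [tendsto_nhdsWithin_iff]
      constructor
      · exact tendsto_one_div_add_atTop_nhds_zero_nat
      · exact Eventually.of_forall fun n => ne_of_gt (htpos n)
    have := hd.comp hseq
    convert this using 2 with n
    rw [hF]
    simp only [Function.comp]
    rw [smul_eq_mul, one_div, inv_inv]
  have hlim := tendsto_integral_of_dominated_convergence G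
    (fun n => (hFint n).aestronglyMeasurable) hGint hbound hconv
  have : Tendsto (fun n : ℕ => ∫ x, F n x) atTop (𝓝 0) := by
    simp only [hFzero]
    exact tendsto_const_nhds
  exact (tendsto_nhds_unique hlim this)


lemma lipschitz_mul {f g : ℝ → ℝ} {Kf Kg : ℝ≥0} {Bf Bg : ℝ}
    (hf : LipschitzWith Kf f) (hg : LipschitzWith Kg g)
    (hbf : ∀ x, |f x| ≤ Bf) (hbg : ∀ x, |g x| ≤ Bg) :
    ∃ K : ℝ≥0, LipschitzWith K (fun x => f x * g x) := by
  refine ⟨(Bf * (Kg:ℝ) + Bg * (Kf:ℝ)).toNNReal, LipschitzWith.of_dist_le_mul fun x y => ?_⟩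
  have hdf : |f x - f y| ≤ (Kf:ℝ) * dist x y := by
    have := hf.dist_le_mul x y; rwa [Real.dist_eq] at this
  have hdg : |g x - g y| ≤ (Kg:ℝ) * dist x y := by
    have := hg.dist_le_mul x y; rwa [Real.dist_eq] at this
  have key : f x * g x - f y * g y = f x * (g x - g y) + g y * (f x - f y) := by ring
  rw [Real.dist_eq, key]
  have h1 : |f x * (g x - g y)| ≤ Bf * ((Kg:ℝ) * dist x y) := by
    rw [abs_mul]
    exact mul_le_mul (hbf x) hdg (abs_nonneg _) ((abs_nonneg (f x)).trans (hbf x))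
  have h2 : |g y * (f x - f y)| ≤ Bg * ((Kf:ℝ) * dist x y) := by
    rw [abs_mul]
    exact mul_le_mul (hbg y) hdf (abs_nonneg _) ((abs_nonneg (g y)).trans (hbg y))
  calc |f x * (g x - g y) + g y * (f x - f y)|
      ≤ |f x * (g x - g y)| + |g y * (f x - f y)| := abs_add_le _ _
    _ ≤ (Bf * (Kg:ℝ) + Bg * (Kf:ℝ)) * dist x y := by rw [add_mul]; linarith
    _ ≤ ((Bf * (Kg:ℝ) + Bg * (Kf:ℝ)).toNNReal : ℝ) * dist x y := by
        apply mul_le_mul_of_nonneg_right _ dist_nonneg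
        rw [Real.coe_toNNReal']
        exact le_max_left _ _

/-- the clamped power function `x ↦ (min (max x 0) 1)^n` is Lipschitz. -/
lemma lipschitz_clamp_pow (n : ℕ) :
    ∃ K : ℝ≥0, LipschitzWith K (fun x : ℝ => (min (max x 0) 1) ^ n) := by
  have hc : LipschitzWith 1 (fun x : ℝ => min (max x 0) 1) :=
    (LipschitzWith.id.max_const 0).min_const 1
  have hmem : ∀ x : ℝ, min (max x 0) 1 ∈ Icc (0:ℝ) 1 := fun x =>
    ⟨le_min (le_max_right x 0) zero_le_one, min_le_right _ _⟩
  have hpow : LipschitzOnWith (n : ℝ≥0) (fun x : ℝ => x ^ n) (Icc (0:ℝ) 1) := by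
    apply (convex_Icc (0:ℝ) 1).lipschitzOnWith_of_nnnorm_deriv_le
      (fun x _ => (differentiable_pow n).differentiableAt)
    intro x hx
    rw [← NNReal.coe_le_coe, coe_nnnorm, NNReal.coe_natCast]
    rw [deriv_pow_field]
    rw [Real.norm_eq_abs, abs_mul, abs_pow]
    calc |(n:ℝ)| * |x| ^ (n-1) ≤ |(n:ℝ)| * 1 := by
          apply mul_le_mul_of_nonneg_left _ (abs_nonneg _)
          exact pow_le_one₀ (abs_nonneg x) (abs_le.2 ⟨by linarith [hx.1], hx.2⟩)
      _ = (n:ℝ) := by rw [mul_one, abs_of_nonneg (Nat.cast_nonneg n)]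
  refine ⟨(n : ℝ≥0) * 1, fun x y => ?_⟩
  calc edist ((min (max x 0) 1) ^ n) ((min (max y 0) 1) ^ n)
      ≤ (n : ℝ≥0) * edist (min (max x 0) 1) (min (max y 0) 1) :=
        hpow (hmem x) (hmem y)
    _ ≤ (n : ℝ≥0) * (1 * edist x y) := by
        exact mul_le_mul_right (hc x y) _
    _ = ((n : ℝ≥0) * 1 : ℝ≥0) * edist x y := by rw [one_mul]; push_cast; ring_nf


lemma hardy (N : ℕ) (hN : 3 ≤ N) (φ : ℝ → ℝ) {K : ℝ≥0} (hl : LipschitzWith K φ)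
    (hc : HasCompactSupport φ) (hsupp : tsupport φ ⊆ Ioo 0 1) :
    0 ≤ ∫ r in Ioo (0:ℝ) 1,
        r ^ ((N : ℝ) - 1) * ((deriv φ r) ^ 2 - ((N:ℝ)-2)^2/(4*r^2) * (φ r) ^ 2) := by
  obtain ⟨k, hk3⟩ : ∃ k : ℕ, N = k + 3 := ⟨N - 3, by omega⟩
  have hNr : (N:ℝ) = (k:ℝ) + 3 := by rw [hk3]; push_cast; ring
  set a : ℝ := ((N:ℝ) - 2)/2 with ha
  have ha' : a = ((k:ℝ)+1)/2 := by rw [ha, hNr]; ring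
  -- the auxiliary function h
  set w : ℝ → ℝ := fun x => (min (max x 0) 1) ^ (k+1) with hw
  set h : ℝ → ℝ := fun x => w x * (φ x * φ x) with hh
  obtain ⟨B, hB⟩ := hc.exists_bound_of_continuous hl.continuous
  simp only [Real.norm_eq_abs] at hB
  have hB0 : (0:ℝ) ≤ B := (abs_nonneg _).trans (hB 0)
  -- h is Lipschitz
  obtain ⟨Kw, hwl⟩ := lipschitz_clamp_pow (k+1)
  have hwb : ∀ x, |w x| ≤ 1 := by
    intro x
    rw [hw]
    have h0 : (0:ℝ) ≤ min (max x 0) 1 := le_min (le_max_right x 0) zero_le_one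
    have h1 : min (max x 0) 1 ≤ 1 := min_le_right _ _
    rw [abs_of_nonneg (pow_nonneg h0 _)]
    exact pow_le_one₀ h0 h1
  obtain ⟨Kψ, hψl⟩ := lipschitz_mul hl hl hB hB
  have hψb : ∀ x, |φ x * φ x| ≤ B * B := fun x => by
    rw [abs_mul]; exact mul_le_mul (hB x) (hB x) (abs_nonneg _) hB0
  obtain ⟨Kh, hhl⟩ := lipschitz_mul hwl hψl hwb hψb
  rw [← hh] at hhl
  -- compact support of h, and tsupport h ⊆ Ioo 0 1
  have hsupph : Function.support h ⊆ Function.support φ := by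
    intro x hx
    simp only [hh, Function.mem_support] at hx ⊢
    intro h0; apply hx; rw [h0]; ring
  have htsupph : tsupport h ⊆ Ioo 0 1 :=
    (closure_mono hsupph).trans hsupp
  have hch : HasCompactSupport h :=
    HasCompactSupport.of_support_subset_isCompact hc (hsupph.trans (subset_tsupport φ))
  -- deriv h vanishes outside tsupport h
  have hd0 : ∀ r, r ∉ tsupport h → deriv h r = 0 := by
    intro r hr
    have hev : h =ᶠ[𝓝 r] (fun _ => (0:ℝ)) := by
      filter_upwards [(isClosed_tsupport h).isOpen_compl.mem_nhds hr] with y hy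
      exact image_eq_zero_of_notMem_tsupport hy
    rw [hev.deriv_eq]; exact deriv_const r 0
  -- integral of deriv h over Ioo 0 1 is 0
  have hderint : ∫ r in Ioo (0:ℝ) 1, deriv h r = 0 := by
    have : ∫ r in Ioo (0:ℝ) 1, deriv h r = ∫ r : ℝ, deriv h r := by
      rw [← integral_indicator measurableSet_Ioo]
      congr 1
      funext x
      by_cases hx : x ∈ Ioo (0:ℝ) 1
      · rw [indicator_of_mem hx]
      · rw [indicator_of_notMem hx]
        exact (hd0 x (fun hmem => hx (htsupph hmem))).symm
    rw [this]
    exact lipschitz_ftc hhl hch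
  -- deriv φ is bounded
  have hdφ : ∀ x, |deriv φ x| ≤ (K:ℝ) := by
    intro x
    have := norm_deriv_le_of_lipschitz hl (x₀ := x)
    rwa [Real.norm_eq_abs] at this
  have hdh : ∀ x, |deriv h x| ≤ (Kh:ℝ) := by
    intro x
    have := norm_deriv_le_of_lipschitz hhl (x₀ := x)
    rwa [Real.norm_eq_abs] at this
  -- the linear combination q
  set q : ℝ → ℝ := fun r => r ^ (((N:ℝ)-1)/2) * deriv φ r + a * (r ^ (((N:ℝ)-3)/2) * φ r) with hq
  -- integrability of q^2 on Ioo 0 1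
  have hmeasq : AEStronglyMeasurable q (volume.restrict (Ioo (0:ℝ) 1)) := by
    apply AEStronglyMeasurable.add
    · exact ((Real.continuous_rpow_const (by nlinarith [show (3:ℝ) ≤ (N:ℝ) by exact_mod_cast hN] : (0:ℝ) ≤ ((N:ℝ)-1)/2)).aestronglyMeasurable.mul
        (measurable_deriv φ).aestronglyMeasurable).restrict
    · exact (aestronglyMeasurable_const.mul
        ((Real.continuous_rpow_const (by
          have : (3:ℝ) ≤ (N:ℝ) := by exact_mod_cast hN
          linarith : (0:ℝ) ≤ ((N:ℝ)-3)/2)).aestronglyMeasurable.mul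
          hl.continuous.aestronglyMeasurable)).restrict
  have hqb : ∀ r ∈ Ioo (0:ℝ) 1, |q r| ≤ (K:ℝ) + |a| * B := by
    intro r hr
    have hr0 : (0:ℝ) ≤ r := hr.1.le
    have hN3 : (0:ℝ) ≤ ((N:ℝ)-3)/2 := by
      have : (3:ℝ) ≤ (N:ℝ) := by exact_mod_cast hN
      linarith
    have hA : r ^ (((N:ℝ)-1)/2) ≤ 1 := Real.rpow_le_one hr0 hr.2.le (by nlinarith [show (3:ℝ) ≤ (N:ℝ) by exact_mod_cast hN])
    have hA0 : (0:ℝ) ≤ r ^ (((N:ℝ)-1)/2) := Real.rpow_nonneg hr0 _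
    have hBr : r ^ (((N:ℝ)-3)/2) ≤ 1 := Real.rpow_le_one hr0 hr.2.le hN3
    have hBr0 : (0:ℝ) ≤ r ^ (((N:ℝ)-3)/2) := Real.rpow_nonneg hr0 _
    rw [hq]
    calc |r ^ (((N:ℝ)-1)/2) * deriv φ r + a * (r ^ (((N:ℝ)-3)/2) * φ r)|
        ≤ |r ^ (((N:ℝ)-1)/2) * deriv φ r| + |a * (r ^ (((N:ℝ)-3)/2) * φ r)| := abs_add_le _ _
      _ ≤ (K:ℝ) + |a| * B := by
          apply add_le_add
          · rw [abs_mul, abs_of_nonneg hA0]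
            calc r ^ (((N:ℝ)-1)/2) * |deriv φ r| ≤ 1 * (K:ℝ) :=
                  mul_le_mul hA (hdφ r) (abs_nonneg _) zero_le_one
              _ = (K:ℝ) := one_mul _
          · rw [abs_mul, abs_mul, abs_of_nonneg hBr0]
            apply mul_le_mul_of_nonneg_left _ (abs_nonneg a)
            calc r ^ (((N:ℝ)-3)/2) * |φ r| ≤ 1 * B :=
                  mul_le_mul hBr (hB r) (abs_nonneg _) zero_le_one
              _ = B := one_mul _
  have hq2int : IntegrableOn (fun r => q r ^ 2) (Ioo (0:ℝ) 1) := by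
    apply Integrable.mono' (g := fun _ => ((K:ℝ) + |a| * B)^2)
      (integrableOn_const measure_Ioo_lt_top.ne)
      (hmeasq.pow 2)
    rw [ae_restrict_iff' measurableSet_Ioo]
    refine Eventually.of_forall fun r hr => ?_
    simp only [Pi.pow_apply]
    rw [Real.norm_eq_abs, abs_pow]
    have h1 := hqb r hr
    have h2 : (0:ℝ) ≤ |q r| := abs_nonneg _
    nlinarith
  have hdhint : IntegrableOn (fun r => deriv h r) (Ioo (0:ℝ) 1) := by
    apply Integrable.mono' (g := fun _ => (Kh:ℝ))
      (integrableOn_const measure_Ioo_lt_top.ne)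
      ((measurable_deriv h).aestronglyMeasurable.restrict)
    exact Eventually.of_forall fun r => by rw [Real.norm_eq_abs]; exact hdh r
  -- pointwise identity a.e.
  have hae : ∀ᵐ r ∂(volume : Measure ℝ), r ∈ Ioo (0:ℝ) 1 →
      r ^ ((N : ℝ) - 1) * ((deriv φ r) ^ 2 - ((N:ℝ)-2)^2/(4*r^2) * (φ r) ^ 2)
        = q r ^ 2 - a * deriv h r := by
    filter_upwards [hl.ae_differentiableAt (μ := volume)] with r hdiff hr
    have hr0 : (0:ℝ) < r := hr.1
    have hrne : r ≠ 0 := ne_of_gt hr0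
    -- compute deriv h r
    have hev : h =ᶠ[𝓝 r] (fun x => x ^ (k+1) * (φ x * φ x)) := by
      filter_upwards [isOpen_Ioo.mem_nhds hr] with y hy
      have : min (max y 0) 1 = y := by
        rw [max_eq_left hy.1.le, min_eq_left hy.2.le]
      simp only [hh, hw, this]
    have hder : HasDerivAt (fun x : ℝ => x ^ (k+1) * (φ x * φ x))
        (((k:ℝ)+1) * r^k * (φ r * φ r) + r^(k+1) * (deriv φ r * φ r + φ r * deriv φ r)) r := by
      have h1 : HasDerivAt (fun x : ℝ => x ^ (k+1)) (((k:ℝ)+1) * r^k) r := by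
        have := hasDerivAt_pow (k+1) r
        simpa using this
      exact h1.mul (hdiff.hasDerivAt.mul hdiff.hasDerivAt)
    have hDh : deriv h r = ((k:ℝ)+1) * r^k * (φ r * φ r)
        + r^(k+1) * (deriv φ r * φ r + φ r * deriv φ r) := by
      rw [hev.deriv_eq]; exact hder.deriv
    -- rpow → npow conversions
    have e1 : (r ^ (((N:ℝ)-1)/2))^2 = r^(k+2) := by
      rw [sq, ← Real.rpow_add hr0, ← Real.rpow_natCast r (k+2)]
      congr 1; push_cast [hNr]; ring
    have e2 : r ^ (((N:ℝ)-1)/2) * r ^ (((N:ℝ)-3)/2) = r^(k+1) := by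
      rw [← Real.rpow_add hr0, ← Real.rpow_natCast r (k+1)]
      congr 1; push_cast [hNr]; ring
    have e3 : (r ^ (((N:ℝ)-3)/2))^2 = r^k := by
      rw [sq, ← Real.rpow_add hr0, ← Real.rpow_natCast r k]
      congr 1; push_cast [hNr]; ring
    have e4 : r ^ ((N:ℝ)-1) = r^(k+2) := by
      rw [← Real.rpow_natCast r (k+2)]
      congr 1; push_cast [hNr]; ring
    have expand : q r ^ 2 = (r ^ (((N:ℝ)-1)/2))^2 * (deriv φ r)^2
        + 2 * a * (r ^ (((N:ℝ)-1)/2) * r ^ (((N:ℝ)-3)/2)) * (deriv φ r * φ r)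
        + a^2 * (r ^ (((N:ℝ)-3)/2))^2 * (φ r)^2 := by
      rw [hq]; ring
    rw [expand, e1, e2, e3, e4, hDh, hNr, ha']
    have hp1 : r^(k+2) = r^k * r^2 := by rw [pow_add]
    have hp2 : r^(k+1) = r^k * r := by rw [pow_add, pow_one]
    rw [hp1, hp2]
    field_simp
    ring
  -- put everything together
  have key : ∫ r in Ioo (0:ℝ) 1,
      r ^ ((N : ℝ) - 1) * ((deriv φ r) ^ 2 - ((N:ℝ)-2)^2/(4*r^2) * (φ r) ^ 2)
      = ∫ r in Ioo (0:ℝ) 1, (q r ^ 2 - a * deriv h r) := by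
    apply setIntegral_congr_ae measurableSet_Ioo
    exact hae
  rw [key, integral_sub hq2int (hdhint.const_mul a), integral_const_mul, hderint, mul_zero,
    sub_zero]
  exact setIntegral_nonneg measurableSet_Ioo fun r _ => sq_nonneg _


/-- Optimality for `N = 10 + 4α`: `g(r) = -log r` is an unbounded semi-stable radial `H¹`
solution of the Henon–Gelfand equation `-Δu = (N-2)|x|^α e^{(2+α)u}`, and the linearized
potential `|x|^α f'(u)` equals the optimal Hardy potential `(N-2)²/(4|x|²)`. -/
theorem optimality_dim_eq (N : ℕ) (α : ℝ) (hN : 3 ≤ N) (hα : -2 < α)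
    (hdim : (N : ℝ) = 10 + 4 * α) :
    IsRadialH1Solution N α (fun t => ((N : ℝ) - 2) * Real.exp ((2 + α) * t))
      (fun r => -Real.log r) ∧
    IsSemiStable N α (fun t => ((N : ℝ) - 2) * Real.exp ((2 + α) * t))
      (fun r => -Real.log r) ∧
    (¬ ∃ M : ℝ, ∀ r ∈ Set.Ioc (0:ℝ) 1, |(fun r => -Real.log r) r| ≤ M) ∧
    (∀ r ∈ Set.Ioc (0:ℝ) 1,
      r ^ α * deriv (fun t => ((N : ℝ) - 2) * Real.exp ((2 + α) * t)) (-Real.log r) =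
        ((N : ℝ) - 2) ^ 2 / (4 * r ^ 2)) := by
  have hN3 : (3:ℝ) ≤ (N:ℝ) := by exact_mod_cast hN
  -- derivative of f
  have hdf : ∀ t : ℝ, HasDerivAt (fun t => ((N:ℝ)-2) * Real.exp ((2+α)*t))
      (((N:ℝ)-2) * ((2+α) * Real.exp ((2+α)*t))) t := by
    intro t
    have h1 : HasDerivAt (fun s : ℝ => (2+α)*s) (2+α) t := by
      simpa using (hasDerivAt_id t).const_mul (2+α)
    have h3 := h1.exp.const_mul ((N:ℝ)-2)
    exact h3.congr_deriv (by ring)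
  -- derivative of g
  have hg1 : (deriv fun r : ℝ => -Real.log r) = fun r : ℝ => -r⁻¹ := by
    funext x
    rw [deriv.fun_neg, Real.deriv_log]
  -- rpow facts
  have hm2 : ∀ r : ℝ, 0 < r → r ^ (-2:ℝ) = (r^2)⁻¹ := by
    intro r hr
    rw [show (-2:ℝ) = -((2:ℕ):ℝ) by norm_num, Real.rpow_neg hr.le, Real.rpow_natCast]
  have hexp : ∀ r : ℝ, 0 < r →
      Real.exp ((2+α) * (-Real.log r)) = r ^ (-(2+α)) := by
    intro r hr
    rw [Real.rpow_def_of_pos hr]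
    congr 1
    ring
  have hpow : ∀ r : ℝ, 0 < r → r ^ α * r ^ (-(2+α)) = r ^ (-2:ℝ) := by
    intro r hr
    rw [← Real.rpow_add hr]
    norm_num
  -- part 4
  have hpot : ∀ r : ℝ, 0 < r →
      r ^ α * deriv (fun t => ((N : ℝ) - 2) * Real.exp ((2 + α) * t)) (-Real.log r) =
        ((N : ℝ) - 2) ^ 2 / (4 * r ^ 2) := by
    intro r hr
    have h24 : 2 + α = ((N:ℝ)-2)/4 := by rw [hdim]; ring
    rw [(hdf (-Real.log r)).deriv, hexp r hr]
    calc r ^ α * (((N:ℝ)-2) * ((2+α) * r ^ (-(2+α))))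
        = ((N:ℝ)-2) * (2+α) * (r ^ α * r ^ (-(2+α))) := by ring
      _ = ((N:ℝ)-2) * (2+α) * r ^ (-2:ℝ) := by rw [hpow r hr]
      _ = ((N : ℝ) - 2) ^ 2 / (4 * r ^ 2) := by
          rw [hm2 r hr, h24]
          have : r ^ 2 ≠ 0 := pow_ne_zero 2 (ne_of_gt hr)
          field_simp
  refine ⟨⟨?_, ?_, ?_⟩, ?_, ?_, ?_⟩
  · -- C² regularity
    intro x hx
    exact ((Real.contDiffAt_log.mpr (ne_of_gt hx.1)).neg).contDiffWithinAt
  · -- the ODE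
    intro r hr
    have hr0 : (0:ℝ) < r := hr.1
    rw [hg1]
    have hg2 : deriv (fun x : ℝ => -x⁻¹) r = (r^2)⁻¹ := by
      rw [deriv.fun_neg, deriv_inv]
      ring
    rw [hg2]
    have hterm : r ^ α * (((N:ℝ)-2) * Real.exp ((2+α) * (-Real.log r)))
        = ((N:ℝ)-2) * (r^2)⁻¹ := by
      rw [hexp r hr0,
        show r ^ α * (((N:ℝ)-2) * r ^ (-(2+α))) = ((N:ℝ)-2) * (r ^ α * r ^ (-(2+α))) from by
          ring,
        hpow r hr0, hm2 r hr0]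
    show (r^2)⁻¹ + ((N:ℝ)-1)/r * (-r⁻¹)
        + r ^ α * (((N:ℝ)-2) * Real.exp ((2+α) * (-Real.log r))) = 0
    rw [hterm]
    have hrne : r ≠ 0 := ne_of_gt hr0
    field_simp
    ring
  · -- integrability
    have hexp3 : (-1:ℝ) < (N:ℝ) - 3 := by rw [hdim]; linarith
    have hbig : IntegrableOn (fun r : ℝ => 2 * r ^ ((N:ℝ)-3)) (Ioc 0 1) := by
      have h1 : IntervalIntegrable (fun r : ℝ => r ^ ((N:ℝ)-3)) volume 0 1 :=
        intervalIntegral.intervalIntegrable_rpow' hexp3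
      exact ((intervalIntegrable_iff_integrableOn_Ioc_of_le zero_le_one).1 h1).const_mul 2
    rw [hg1]
    apply Integrable.mono' hbig
    · exact (((Real.continuous_rpow_const (by linarith : (0:ℝ) ≤ (N:ℝ)-1)).measurable).mul
        (((Real.measurable_log.neg).pow_const 2).add
          ((measurable_inv.neg).pow_const 2))).aestronglyMeasurable.restrict
    · rw [ae_restrict_iff' measurableSet_Ioc]
      refine Eventually.of_forall fun r hr => ?_
      have hr0 : (0:ℝ) < r := hr.1
      have hlogsq : (Real.log r)^2 ≤ (r⁻¹)^2 := by
        have hli : Real.log r⁻¹ ≤ r⁻¹ - 1 := Real.log_le_sub_one_of_pos (inv_pos.2 hr0)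
        rw [Real.log_inv] at hli
        have hneg : Real.log r ≤ 0 := Real.log_nonpos hr0.le hr.2
        have hipos : (0:ℝ) < r⁻¹ := inv_pos.2 hr0
        apply sq_le_sq'
        · linarith
        · linarith
      have hA0 : (0:ℝ) ≤ r ^ ((N:ℝ)-1) := Real.rpow_nonneg hr0.le _
      have hinv2 : (r⁻¹)^2 = (r^2)⁻¹ := inv_pow r 2
      have hfr : r ^ ((N:ℝ)-1) * ((-Real.log r)^2 + (-r⁻¹)^2)
          ≤ 2 * r ^ ((N:ℝ)-3) := by
        have key : r ^ ((N:ℝ)-1) * (r^2)⁻¹ = r ^ ((N:ℝ)-3) := by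
          rw [← hm2 r hr0, ← Real.rpow_add hr0]
          congr 1
          ring
        calc r ^ ((N:ℝ)-1) * ((-Real.log r)^2 + (-r⁻¹)^2)
            = r ^ ((N:ℝ)-1) * ((Real.log r)^2 + (r⁻¹)^2) := by rw [neg_sq, neg_sq]
          _ ≤ r ^ ((N:ℝ)-1) * ((r⁻¹)^2 + (r⁻¹)^2) := by
              apply mul_le_mul_of_nonneg_left _ hA0
              linarith
          _ = 2 * (r ^ ((N:ℝ)-1) * (r^2)⁻¹) := by rw [hinv2]; ring
          _ = 2 * r ^ ((N:ℝ)-3) := by rw [key]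
      rw [Real.norm_eq_abs, abs_of_nonneg]
      · exact hfr
      · positivity
  · -- semistability
    intro φ hK hcs hsupp
    obtain ⟨K, hl⟩ := hK
    have := hardy N hN φ hl hcs hsupp
    refine le_trans this (le_of_eq ?_)
    apply setIntegral_congr_fun measurableSet_Ioo
    intro r hr
    simp only
    rw [hpot r hr.1]
  · -- unboundedness
    rintro ⟨M, hM⟩
    have h1 := hM (Real.exp (-(|M|+1)))
      ⟨Real.exp_pos _, by rw [Real.exp_le_one_iff]; linarith [abs_nonneg M]⟩
    simp only [Real.log_exp, neg_neg] at h1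
    have h2 : |M| + 1 ≤ M := le_trans (le_abs_self _) h1
    linarith [le_abs_self M]
  · -- the Hardy potential identity
    intro r hr
    exact hpot r hr.1
end

section
/- Let N ≥ 2 be an integer and α > −2 a real number with N > 10 + 4α, and let γ be a real number with γ(N,α) ≤ γ < 0, where γ(N,α) := 2 − N/2 + α/2 + √((α+2)(α+2N−2))/2. Then (−γ + α + 2)·(γ + N − 2) ≤ (N−2)²/4. -/
/-!
As a function of `γ`, the product `(-γ + α + 2) * (γ + N - 2)` is a downward parabola with vertex
`c = (α + 4 - N) / 2`, and it equals `(N - 2)² / 4 + ((α + 2) * (α + 2N - 2) - (2 (γ - c))²) / 4`.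
The threshold `γ(N,α) = c + √((α + 2) * (α + 2N - 2)) / 2` is exactly where the square term
reaches the discriminant, so past it the product is at most `(N - 2)² / 4`.
-/

lemma le_two_mul_sub_sq_of_add_sqrt_le {c P γ : ℝ} (h : c + √P / 2 ≤ γ) :
    P ≤ (2 * (γ - c)) ^ 2 :=
  (Real.sqrt_le_iff.mp (by linarith)).2

lemma hardy_product_eq (N α γ : ℝ) :
    (-γ + α + 2) * (γ + N - 2) =
      (N - 2) ^ 2 / 4 + ((α + 2) * (α + 2 * N - 2) - (2 * (γ - (α + 4 - N) / 2)) ^ 2) / 4 := by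
  ring

theorem hardy_constant_bound_general (N : ℕ) (α γ : ℝ)
    (hγ₁ : 2 - (N : ℝ) / 2 + α / 2 +
      Real.sqrt ((α + 2) * (α + 2 * (N : ℝ) - 2)) / 2 ≤ γ) :
    (-γ + α + 2) * (γ + (N : ℝ) - 2) ≤ ((N : ℝ) - 2) ^ 2 / 4 := by
  have hdiscr : (α + 2) * (α + 2 * N - 2) ≤ (2 * (γ - (α + 4 - N) / 2)) ^ 2 :=
    le_two_mul_sub_sq_of_add_sqrt_le (by linarith)
  rw [hardy_product_eq]
  linarith

/-- If `N > 10 + 4α` and `γ(N,α) ≤ γ < 0`, then `(-γ+α+2)(γ+N-2) ≤ (N-2)²/4`. -/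
theorem hardy_constant_bound (N : ℕ) (α γ : ℝ) (hN : 2 ≤ N) (hα : -2 < α)
    (hdim : (N : ℝ) > 10 + 4 * α)
    (hγ₁ : 2 - (N : ℝ) / 2 + α / 2 +
      Real.sqrt ((α + 2) * (α + 2 * (N : ℝ) - 2)) / 2 ≤ γ)
    (hγ₂ : γ < 0) :
    (-γ + α + 2) * (γ + (N : ℝ) - 2) ≤ ((N : ℝ) - 2) ^ 2 / 4 :=
  hardy_constant_bound_general N α γ hγ₁
end

section
/- Let N ≥ 3 be an integer and α > −2 a real number with N ≥ 10 + 4α. Then g(r) := −(2+α)·log r + log((2+α)(N−2)) satisfies g''(r) + ((N−1)/r)·g'(r) + r^α·e^{g(r)} = 0 for all r > 0, and is stable in ℝ^N: for every Lipschitz function φ : (0,∞) → ℝ with compact support in (0,∞), ∫₀^∞ r^{N−1}·( φ'(r)² − r^α·e^{g(r)}·φ(r)² ) dr ≥ 0. In other words, u(x) = −(2+α)log|x| + log((2+α)(N−2)) is a radial stable solution of the Gelfand–Henon equation −Δu = |x|^α e^u in ℝ^N∖{0}. -/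
open MeasureTheory Set Filter Topology

lemma deriv_le_of_lip {K : NNReal} {f : ℝ → ℝ} (hf : LipschitzWith K f) (x : ℝ) :
    |deriv f x| ≤ K := by
  by_cases hd : DifferentiableAt ℝ f x
  · have hs := hasDerivAt_iff_tendsto_slope.1 hd.hasDerivAt
    refine le_of_tendsto hs.abs ?_
    filter_upwards [self_mem_nhdsWithin] with y (hy : y ≠ x)
    have h1 : |f y - f x| ≤ (K : ℝ) * |y - x| := by
      simpa [Real.dist_eq] using hf.dist_le_mul y x
    rw [slope_def_field, abs_div,
      div_le_iff₀ (by simpa [sub_eq_zero] using hy : (0:ℝ) < |y - x|)]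
    exact h1
  · simp [deriv_zero_of_not_differentiableAt hd]

lemma seq_aux (c : ℝ) : Tendsto (fun n : ℕ => c + ((n : ℝ) + 1)⁻¹) atTop (𝓝[≠] c) := by
  rw [tendsto_nhdsWithin_iff]
  constructor
  · have : Tendsto (fun n : ℕ => ((n : ℝ) + 1)⁻¹) atTop (𝓝 0) :=
      tendsto_one_div_add_atTop_nhds_zero_nat.congr (by simp [one_div])
    simpa using tendsto_const_nhds.add this
  · filter_upwards with n
    have h : (0:ℝ) < ((n : ℝ) + 1)⁻¹ := by positivity
    simp only [mem_compl_iff, mem_singleton_iff]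
    intro hc; nlinarith

/-- FTC for Lipschitz functions -/
lemma lipschitz_integral_deriv {K : NNReal} {H : ℝ → ℝ} (hH : LipschitzWith K H)
    (a b : ℝ) : ∫ x in a..b, deriv H x = H b - H a := by
  set h : ℕ → ℝ := fun n => ((n : ℝ) + 1)⁻¹ with hh
  have hh0 : ∀ n, (0:ℝ) < h n := fun n => by positivity
  have hcont := hH.continuous
  set Φ : ℝ → ℝ := fun t => ∫ x in a..t, H x with hΦ
  have hslope : ∀ c : ℝ, Tendsto (fun n => (Φ (c + h n) - Φ c) / h n) atTop (𝓝 (H c)) := by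
    intro c
    have hd : HasDerivAt Φ (H c) c := (hcont.integral_hasStrictDerivAt a c).hasDerivAt
    have hs := hasDerivAt_iff_tendsto_slope.1 hd
    refine (hs.comp (seq_aux c)).congr fun n => ?_
    simp only [Function.comp_def, slope_def_field, add_sub_cancel_left]
    rfl
  set G : ℕ → ℝ := fun n => ∫ x in a..b, (H (x + h n) - H x) / h n with hG
  have hIntH : ∀ u v : ℝ, IntervalIntegrable H volume u v := fun u v =>
    hcont.intervalIntegrable u v
  have stepA : ∀ n, G n = (Φ (b + h n) - Φ b) / h n - (Φ (a + h n) - Φ a) / h n := by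
    intro n
    have h1 : (∫ x in a..b, H (x + h n)) = ∫ x in (a + h n)..(b + h n), H x :=
      intervalIntegral.integral_comp_add_right H (h n)
    have hI2 : IntervalIntegrable (fun x => H (x + h n)) volume a b :=
      (hcont.comp (continuous_id.add continuous_const)).intervalIntegrable _ _
    have h2 : G n = ((∫ x in a..b, H (x + h n)) - ∫ x in a..b, H x) / h n := by
      show (∫ x in a..b, (H (x + h n) - H x) / h n) = _
      rw [intervalIntegral.integral_div, intervalIntegral.integral_sub hI2 (hIntH a b)]
    have h3 : (∫ x in (a + h n)..(b + h n), H x) = Φ (b + h n) - Φ (a + h n) :=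
      (intervalIntegral.integral_interval_sub_left (hIntH a (b + h n)) (hIntH a (a + h n))).symm
    have h4 : (∫ x in a..b, H x) = Φ b - Φ a :=
      (intervalIntegral.integral_interval_sub_left (hIntH a b) (hIntH a a)).symm
    rw [h2, h1, h3, h4]; ring
  have limG1 : Tendsto G atTop (𝓝 (H b - H a)) := by
    simp only [funext stepA]
    exact ((hslope b).sub (hslope a))
  have limG2 : Tendsto G atTop (𝓝 (∫ x in a..b, deriv H x)) := by
    apply intervalIntegral.tendsto_integral_filter_of_dominated_convergence (fun _ => (K : ℝ))
    · filter_upwards with n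
      exact (((hcont.comp (continuous_id.add continuous_const)).sub hcont).div_const _).aestronglyMeasurable
    · filter_upwards with n
      filter_upwards with x _
      have h1 : |H (x + h n) - H x| ≤ (K : ℝ) * h n := by
        have := hH.dist_le_mul (x + h n) x
        simpa [Real.dist_eq, abs_of_pos (hh0 n)] using this
      rw [Real.norm_eq_abs, abs_div, abs_of_pos (hh0 n), div_le_iff₀ (hh0 n)]
      exact h1
    · exact intervalIntegrable_const
    · have := hH.ae_differentiableAt (μ := volume)
      filter_upwards [this] with x hx _
      have hs := hasDerivAt_iff_tendsto_slope.1 hx.hasDerivAt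
      refine (hs.comp (seq_aux x)).congr fun n => ?_
      simp only [Function.comp_def, slope_def_field, add_sub_cancel_left]
      rfl
  exact tendsto_nhds_unique limG2 limG1

lemma lip_mul_of_bounded {f g : ℝ → ℝ} {Kf Kg : NNReal} {Bf Bg : ℝ}
    (hf : LipschitzWith Kf f) (hg : LipschitzWith Kg g)
    (hbf : ∀ x, |f x| ≤ Bf) (hbg : ∀ x, |g x| ≤ Bg) :
    ∃ K : NNReal, LipschitzWith K (fun x => f x * g x) := by
  refine ⟨‖Bf‖₊ * Kg + ‖Bg‖₊ * Kf, LipschitzWith.of_dist_le_mul fun x y => ?_⟩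
  have h1 : |f x - f y| ≤ (Kf : ℝ) * |x - y| := by
    simpa [Real.dist_eq] using hf.dist_le_mul x y
  have h2 : |g x - g y| ≤ (Kg : ℝ) * |x - y| := by
    simpa [Real.dist_eq] using hg.dist_le_mul x y
  have key : |f x * g x - f y * g y| ≤ (|Bf| * Kg + |Bg| * Kf) * |x - y| := by
    have e : f x * g x - f y * g y = f x * (g x - g y) + g y * (f x - f y) := by ring
    calc |f x * g x - f y * g y| ≤ |f x| * |g x - g y| + |g y| * |f x - f y| := by
          rw [e]; refine (abs_add_le _ _).trans ?_; rw [abs_mul, abs_mul]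
      _ ≤ (|Bf| * Kg + |Bg| * Kf) * |x - y| := by
          have hfx : |f x| ≤ |Bf| := (hbf x).trans (le_abs_self _)
          have hgy : |g y| ≤ |Bg| := (hbg y).trans (le_abs_self _)
          have := mul_le_mul hfx h2 (abs_nonneg _) (abs_nonneg _)
          have := mul_le_mul hgy h1 (abs_nonneg _) (abs_nonneg _)
          nlinarith [abs_nonneg (g x - g y), abs_nonneg (f x - f y), abs_nonneg (f x), abs_nonneg (g y)]
  simpa [Real.dist_eq, NNReal.coe_add, NNReal.coe_mul, coe_nnnorm, Real.norm_eq_abs] using key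

lemma clamp_abs_le (M : ℝ) (x : ℝ) : |min (max x 0) M| ≤ |M| + 1 := by
  have h0 : 0 ≤ max x 0 := le_max_right _ _
  rcases le_or_gt (max x 0) M with h | h
  · rw [min_eq_left h, abs_of_nonneg h0]
    have := le_abs_self M; linarith
  · rw [min_eq_right h.le]
    have := le_abs_self M; have := abs_nonneg M; linarith

lemma lip_clamp_pow (M : ℝ) (k : ℕ) :
    ∃ K : NNReal, LipschitzWith K (fun r : ℝ => (min (max r 0) M) ^ k) := by
  have hclip : LipschitzWith 1 (fun r : ℝ => min (max r 0) M) :=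
    (LipschitzWith.id.max_const 0).min_const M
  induction k with
  | zero => exact ⟨0, by simpa using LipschitzWith.const (1:ℝ)⟩
  | succ n ih =>
    obtain ⟨Kn, hKn⟩ := ih
    have hbdn : ∀ x : ℝ, |(min (max x 0) M) ^ n| ≤ (|M| + 1) ^ n := by
      intro x
      rw [abs_pow]
      exact pow_le_pow_left₀ (abs_nonneg _) (clamp_abs_le M x) n
    obtain ⟨K, hK⟩ := lip_mul_of_bounded hKn hclip hbdn (clamp_abs_le M)
    exact ⟨K, by simpa [pow_succ] using hK⟩

lemma clamp_pow_abs_le (M : ℝ) (k : ℕ) (x : ℝ) :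
    |(min (max x 0) M) ^ k| ≤ (|M| + 1) ^ k := by
  rw [abs_pow]
  exact pow_le_pow_left₀ (abs_nonneg _) (clamp_abs_le M x) k

lemma measurable_rpow_const_fun (c : ℝ) : Measurable (fun r : ℝ => r ^ c) := by
  measurability

set_option maxHeartbeats 1000000 in
/-- If `N ≥ 10 + 4α`, then `u(x) = -(2+α) log|x| + log((2+α)(N-2))` is a radial stable
solution of the Gelfand–Henon equation `-Δu = |x|^α e^u` in `ℝ^N \ {0}`. -/
theorem gelfand_henon_stable_solution (N : ℕ) (α : ℝ) (hN : 3 ≤ N) (hα : -2 < α)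
    (hdim : (N : ℝ) ≥ 10 + 4 * α) :
    (∀ r : ℝ, 0 < r →
      deriv (deriv (fun s : ℝ => -(2 + α) * Real.log s +
          Real.log ((2 + α) * ((N : ℝ) - 2)))) r +
        ((N : ℝ) - 1) / r * deriv (fun s : ℝ => -(2 + α) * Real.log s +
          Real.log ((2 + α) * ((N : ℝ) - 2))) r +
        r ^ α * Real.exp (-(2 + α) * Real.log r +
          Real.log ((2 + α) * ((N : ℝ) - 2))) = 0) ∧
    (∀ φ : ℝ → ℝ, (∃ K, LipschitzWith K φ) → HasCompactSupport φ →
      tsupport φ ⊆ Set.Ioi 0 →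
      0 ≤ ∫ r in Set.Ioi (0:ℝ),
          r ^ ((N : ℝ) - 1) * ((deriv φ r) ^ 2 -
            r ^ α * Real.exp (-(2 + α) * Real.log r +
              Real.log ((2 + α) * ((N : ℝ) - 2))) * (φ r) ^ 2)) := by
  have hα2 : (0:ℝ) < 2 + α := by linarith
  have hN3 : (3:ℝ) ≤ (N:ℝ) := by exact_mod_cast hN
  have hN2 : (0:ℝ) < (N : ℝ) - 2 := by linarith
  have hc : (0:ℝ) < (2 + α) * ((N : ℝ) - 2) := mul_pos hα2 hN2
  set c : ℝ := (2 + α) * ((N : ℝ) - 2) with hcdef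
  -- the potential term simplifies
  have hE : ∀ r : ℝ, 0 < r →
      r ^ α * Real.exp (-(2 + α) * Real.log r + Real.log c) = c * (r ^ 2)⁻¹ := by
    intro r hr
    have hexp : Real.exp (-(2 + α) * Real.log r + Real.log c) = c * r ^ (-(2 + α)) := by
      rw [Real.exp_add, Real.exp_log hc, Real.rpow_def_of_pos hr]
      ring_nf
    rw [hexp]
    have hrpow : r ^ α * r ^ (-(2 + α)) = (r ^ 2)⁻¹ := by
      rw [← Real.rpow_add hr]
      have h : α + -(2 + α) = -2 := by ring
      rw [h, show ((r:ℝ) ^ (2:ℕ))⁻¹ = r ^ (-((2:ℕ):ℝ)) by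
        rw [← Real.rpow_natCast r 2, ← Real.rpow_neg hr.le]]
      norm_num
    calc r ^ α * (c * r ^ (-(2 + α))) = c * (r ^ α * r ^ (-(2 + α))) := by ring
      _ = c * (r ^ 2)⁻¹ := by rw [hrpow]
  constructor
  · -- the ODE
    intro r hr
    set g : ℝ → ℝ := fun s => -(2 + α) * Real.log s + Real.log c with hg
    have hd1 : ∀ s : ℝ, s ≠ 0 → deriv g s = -(2 + α) * s⁻¹ := by
      intro s hs
      exact (((Real.hasDerivAt_log hs).const_mul (-(2 + α))).add_const _).deriv
    have hev : deriv g =ᶠ[𝓝 r] fun s => -(2 + α) * s⁻¹ := by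
      filter_upwards [eventually_ne_nhds hr.ne'] with s hs
      exact hd1 s hs
    have hd2 : deriv (deriv g) r = -(2 + α) * -(r ^ 2)⁻¹ := by
      rw [hev.deriv_eq]
      exact ((hasDerivAt_inv hr.ne').const_mul (-(2 + α))).deriv
    have hgr : deriv g r = -(2 + α) * r⁻¹ := hd1 r hr.ne'
    show deriv (deriv g) r + ((N : ℝ) - 1) / r * deriv g r + r ^ α * Real.exp (g r) = 0
    rw [hd2, hgr]
    have : r ^ α * Real.exp (g r) = c * (r ^ 2)⁻¹ := hE r hr
    rw [this]
    have hr2 : (r:ℝ) ^ 2 ≠ 0 := by positivity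
    field_simp [hcdef]
    ring
  · -- stability
    intro φ hlip hcs hsupp
    obtain ⟨Kφ, hφ⟩ := hlip
    obtain ⟨Bφ, hBφ⟩ := hcs.exists_bound_of_continuous hφ.continuous
    have hBφ' : ∀ x, |φ x| ≤ Bφ := fun x => by simpa using hBφ x
    -- support interval
    obtain ⟨a, b, ha, hab, hsub⟩ :
        ∃ a b : ℝ, 0 < a ∧ a ≤ b ∧ tsupport φ ⊆ Icc a b := by
      rcases eq_empty_or_nonempty (tsupport φ) with h | h
      · exact ⟨1, 2, one_pos, by norm_num, by rw [h]; exact empty_subset _⟩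
      · have hK : IsCompact (tsupport φ) := hcs
        refine ⟨sInf (tsupport φ), sSup (tsupport φ), hsupp (hK.sInf_mem h), ?_, ?_⟩
        · exact csInf_le_csSup h hK.bddBelow hK.bddAbove
        · intro x hx
          exact ⟨csInf_le hK.bddBelow hx, le_csSup hK.bddAbove hx⟩
    set M : ℝ := b + 1 with hM
    have haM : a / 2 < M := by linarith
    have ha2 : (0:ℝ) < a / 2 := by linarith
    set ψ : ℝ → ℝ := fun r => (min (max r 0) M) ^ (N - 2) with hψ
    obtain ⟨Kψ, hψlip⟩ := lip_clamp_pow M (N - 2)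
    set lam : ℝ := ((N:ℝ) - 2) / 2 with hlam
    set H : ℝ → ℝ := fun r => lam * (ψ r * (φ r * φ r)) with hH
    -- H is Lipschitz
    obtain ⟨KH, hHlip⟩ : ∃ K : NNReal, LipschitzWith K H := by
      have hφφbd : ∀ x, |φ x * φ x| ≤ Bφ ^ 2 := fun x => by
        rw [abs_mul, sq]
        exact mul_le_mul (hBφ' x) (hBφ' x) (abs_nonneg _) ((abs_nonneg _).trans (hBφ' x))
      obtain ⟨K1, h1⟩ := lip_mul_of_bounded hφ hφ hBφ' hBφ'
      obtain ⟨K2, h2⟩ := lip_mul_of_bounded hψlip h1 (clamp_pow_abs_le M (N-2)) hφφbd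
      have hψφbd : ∀ x : ℝ, |ψ x * (φ x * φ x)| ≤ (|M|+1) ^ (N-2) * Bφ ^ 2 := fun x => by
        rw [abs_mul]
        exact mul_le_mul (clamp_pow_abs_le M (N-2) x) (hφφbd x) (abs_nonneg _) (by positivity)
      obtain ⟨K3, h3⟩ := lip_mul_of_bounded (LipschitzWith.const lam) h2
        (fun _ => le_refl |lam|) hψφbd
      exact ⟨K3, h3⟩
    -- H and its derivative vanish off tsupport φ
    have hφzero : ∀ r, r ∉ tsupport φ → φ r = 0 ∧ deriv φ r = 0 := by
      intro r hr
      constructor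
      · exact image_eq_zero_of_notMem_tsupport hr
      · have hev : φ =ᶠ[𝓝 r] fun _ => 0 := by
          filter_upwards [(isClosed_tsupport φ).isOpen_compl.eventually_mem hr] with s hs
          exact image_eq_zero_of_notMem_tsupport hs
        rw [hev.deriv_eq, deriv_const]
    have hHzero : ∀ r, r ∉ tsupport φ → H r = 0 ∧ deriv H r = 0 := by
      intro r hr
      constructor
      · simp [hH, (hφzero r hr).1]
      · have hev : H =ᶠ[𝓝 r] fun _ => 0 := by
          filter_upwards [(isClosed_tsupport φ).isOpen_compl.eventually_mem hr] with s hs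
          simp [hH, image_eq_zero_of_notMem_tsupport hs]
        rw [hev.deriv_eq, deriv_const]
    have hnmem : ∀ r : ℝ, r ∉ Icc a b → r ∉ tsupport φ := fun r hr h => hr (hsub h)
    -- ∫ deriv H over Ioi 0 is zero
    have hintH0 : (∫ r in Set.Ioi (0:ℝ), deriv H r) = 0 := by
      have h1 : (∫ r in Set.Ioi (0:ℝ), deriv H r) = ∫ r in Set.Ioc (a/2) M, deriv H r := by
        apply setIntegral_eq_of_subset_of_ae_diff_eq_zero
          measurableSet_Ioi.nullMeasurableSet
        · intro x hx; exact lt_trans ha2 hx.1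
        · filter_upwards with x hx
          refine (hHzero x (hnmem x fun hmem => hx.2 ?_)).2
          exact ⟨lt_of_lt_of_le (by linarith) hmem.1, by linarith [hmem.2]⟩
      have h2 : (∫ r in Set.Ioc (a/2) M, deriv H r) = ∫ r in (a/2)..M, deriv H r :=
        (intervalIntegral.integral_of_le haM.le).symm
      have h3 : (∫ r in (a/2)..M, deriv H r) = H M - H (a/2) :=
        lipschitz_integral_deriv hHlip _ _
      have hHa : H (a/2) = 0 := (hHzero _ (hnmem _ fun hmem => by
        have := hmem.1; linarith)).1
      have hHM : H M = 0 := (hHzero _ (hnmem _ fun hmem => by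
        have := hmem.2; simp only [hM] at this; linarith)).1
      rw [h1, h2, h3, hHa, hHM, sub_zero]
    -- bound on deriv φ
    have hdφ : ∀ x, |deriv φ x| ≤ (Kφ : ℝ) := deriv_le_of_lip hφ
    have hdH : ∀ x, |deriv H x| ≤ (KH : ℝ) := deriv_le_of_lip hHlip
    -- integrand
    set I : ℝ → ℝ := fun r => r ^ ((N : ℝ) - 1) * ((deriv φ r) ^ 2 -
        r ^ α * Real.exp (-(2 + α) * Real.log r + Real.log c) * (φ r) ^ 2) with hI
    have hImeas : Measurable I := by
      apply Measurable.mul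
      · exact measurable_rpow_const_fun _
      · apply Measurable.sub
        · exact (measurable_deriv φ).pow_const 2
        · apply Measurable.mul
          · apply Measurable.mul
            · exact measurable_rpow_const_fun _
            · exact Real.measurable_exp.comp
                ((measurable_const.mul Real.measurable_log).add measurable_const)
          · exact (hφ.continuous.measurable).pow_const 2
    have hIzero : ∀ r, r ∉ tsupport φ → I r = 0 := by
      intro r hr
      simp [hI, (hφzero r hr).1, (hφzero r hr).2]
    -- integrability of I on Ioi 0
    have hIint : IntegrableOn I (Set.Ioi (0:ℝ)) := by
      have hIoc : IntegrableOn I (Set.Ioc (a/2) M) := by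
        apply Measure.integrableOn_of_bounded measure_Ioc_lt_top.ne
          hImeas.aestronglyMeasurable
          (M := M ^ ((N:ℝ) - 1) * ((Kφ:ℝ)^2 + c * ((a/2) ^ 2)⁻¹ * Bφ^2))
        rw [ae_restrict_iff' measurableSet_Ioc]
        filter_upwards with r hr
        have hr0 : 0 < r := lt_trans ha2 hr.1
        have hEr := hE r hr0
        rw [Real.norm_eq_abs, hI]
        have hPpos : (0:ℝ) < r ^ ((N:ℝ) - 1) := Real.rpow_pos_of_pos hr0 _
        have hPle : r ^ ((N:ℝ) - 1) ≤ M ^ ((N:ℝ) - 1) :=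
          Real.rpow_le_rpow hr0.le hr.2 (by linarith)
        have hq : (deriv φ r) ^ 2 ≤ (Kφ:ℝ)^2 := by
          have := hdφ r; nlinarith [abs_nonneg (deriv φ r), sq_abs (deriv φ r)]
        have hp : (φ r) ^ 2 ≤ Bφ ^ 2 := by
          have := hBφ' r; nlinarith [abs_nonneg (φ r), sq_abs (φ r)]
        have hEb : r ^ α * Real.exp (-(2 + α) * Real.log r + Real.log c) ≤ c * ((a/2) ^ 2)⁻¹ := by
          rw [hEr]
          have h1 : ((r:ℝ) ^ 2)⁻¹ ≤ ((a/2) ^ 2)⁻¹ := by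
            apply inv_anti₀ (by positivity)
            nlinarith [hr.1, ha2]
          exact mul_le_mul_of_nonneg_left h1 hc.le
        have hE0 : 0 ≤ r ^ α * Real.exp (-(2 + α) * Real.log r + Real.log c) := by
          rw [hEr]; positivity
        rw [abs_mul, abs_of_pos hPpos]
        have hEp : r ^ α * Real.exp (-(2 + α) * Real.log r + Real.log c) * (φ r) ^ 2
            ≤ c * ((a/2) ^ 2)⁻¹ * Bφ^2 :=
          mul_le_mul hEb hp (sq_nonneg _) (by positivity)
        have hEp0 : 0 ≤ r ^ α * Real.exp (-(2 + α) * Real.log r + Real.log c) * (φ r) ^ 2 :=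
          mul_nonneg hE0 (sq_nonneg _)
        have habs : |(deriv φ r) ^ 2 - r ^ α * Real.exp (-(2 + α) * Real.log r + Real.log c) * (φ r) ^ 2|
            ≤ (Kφ:ℝ)^2 + c * ((a/2) ^ 2)⁻¹ * Bφ^2 := by
          rw [abs_sub_le_iff]
          constructor
          · linarith [hq, hEp0, hEp0.trans hEp]
          · linarith [hEp, sq_nonneg (deriv φ r), hq]
        exact mul_le_mul hPle habs (abs_nonneg _) (Real.rpow_nonneg (by linarith [hr.1, ha2]) _)
      have hrest : IntegrableOn I (Set.Ioi (0:ℝ) \ Set.Ioc (a/2) M) := by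
        apply IntegrableOn.congr_fun (integrableOn_zero)
        · intro x hx
          refine (hIzero x (hnmem x fun hmem => hx.2 ?_)).symm
          exact ⟨lt_of_lt_of_le (by linarith) hmem.1, by linarith [hmem.2]⟩
        · exact measurableSet_Ioi.diff measurableSet_Ioc
      have := hrest.union hIoc
      apply this.mono_set
      intro x hx
      by_cases h : x ∈ Set.Ioc (a/2) M
      · exact Or.inr h
      · exact Or.inl ⟨hx, h⟩
    -- integrability of deriv H on Ioi 0
    have hHint : IntegrableOn (deriv H) (Set.Ioi (0:ℝ)) := by
      have hIoc : IntegrableOn (deriv H) (Set.Ioc (a/2) M) := by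
        apply Measure.integrableOn_of_bounded measure_Ioc_lt_top.ne
          (measurable_deriv H).aestronglyMeasurable (M := (KH:ℝ))
        filter_upwards with x
        exact (Real.norm_eq_abs _) ▸ hdH x
      have hrest : IntegrableOn (deriv H) (Set.Ioi (0:ℝ) \ Set.Ioc (a/2) M) := by
        apply IntegrableOn.congr_fun (integrableOn_zero)
        · intro x hx
          refine ((hHzero x (hnmem x fun hmem => hx.2 ?_)).2).symm
          exact ⟨lt_of_lt_of_le (by linarith) hmem.1, by linarith [hmem.2]⟩
        · exact measurableSet_Ioi.diff measurableSet_Ioc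
      have := hrest.union hIoc
      apply this.mono_set
      intro x hx
      by_cases h : x ∈ Set.Ioc (a/2) M
      · exact Or.inr h
      · exact Or.inl ⟨hx, h⟩
    -- the pointwise a.e. inequality
    have hae : (fun r => -deriv H r) ≤ᵐ[volume.restrict (Set.Ioi (0:ℝ))] I := by
      have h1 : ∀ᵐ r ∂volume.restrict (Set.Ioi (0:ℝ)), DifferentiableAt ℝ φ r :=
        ae_restrict_of_ae (hφ.ae_differentiableAt (μ := volume))
      filter_upwards [h1, self_mem_ae_restrict measurableSet_Ioi] with r hdiff hr
      rcases lt_or_ge r M with hrM | hrM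
      · -- main case : 0 < r < M
        have hr0 : (0:ℝ) < r := hr
        -- ψ equals pow near r
        have hψev : ψ =ᶠ[𝓝 r] fun s => s ^ (N - 2) := by
          filter_upwards [isOpen_Ioo.eventually_mem (⟨hr0, hrM⟩ : r ∈ Set.Ioo 0 M)] with s hs
          simp only [hψ]
          rw [max_eq_left hs.1.le, min_eq_left hs.2.le]
        have hψd : HasDerivAt ψ (((N - 2 : ℕ) : ℝ) * r ^ (N - 3)) r := by
          have h1 : HasDerivAt (fun s : ℝ => s ^ (N - 2)) (((N-2:ℕ):ℝ) * r ^ (N - 2 - 1)) r :=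
            hasDerivAt_pow (N - 2) r
          have h2 : N - 2 - 1 = N - 3 := by omega
          rw [h2] at h1
          exact h1.congr_of_eventuallyEq hψev
        have hφd : HasDerivAt φ (deriv φ r) r := hdiff.hasDerivAt
        have hHd : HasDerivAt H (lam * ((((N-2:ℕ):ℝ) * r ^ (N - 3)) * (φ r * φ r) +
            (min (max r 0) M) ^ (N - 2) * (deriv φ r * φ r + φ r * deriv φ r))) r :=
          ((hψd.mul (hφd.mul hφd)).const_mul lam)
        have hψr : (min (max r 0) M) ^ (N - 2) = r ^ (N - 2) := by
          rw [max_eq_left hr0.le, min_eq_left hrM.le]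
        have hdHr : deriv H r = lam * ((((N-2:ℕ):ℝ) * r ^ (N - 3)) * (φ r * φ r) +
            r ^ (N - 2) * (deriv φ r * φ r + φ r * deriv φ r)) := by
          rw [hHd.deriv, hψr]
        -- rewrite I r
        have hup : r ^ ((N:ℝ) - 1) = r ^ (N - 1 : ℕ) := by
          rw [← Real.rpow_natCast r (N - 1)]
          congr 1
          push_cast [Nat.cast_sub (by omega : 1 ≤ N)]
          ring
        have hIr : I r = r ^ (N - 1 : ℕ) * ((deriv φ r) ^ 2 - c * (r^2)⁻¹ * (φ r) ^ 2) := by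
          rw [hI]
          simp only
          rw [hE r hr0, hup]
        rw [hIr, hdHr]
        have hcast : ((N-2:ℕ):ℝ) = (N:ℝ) - 2 := by
          push_cast [Nat.cast_sub (by omega : 2 ≤ N)]; ring
        have hpow1 : r ^ (N - 1 : ℕ) = r ^ (N - 3 : ℕ) * r ^ 2 := by
          rw [← pow_add]; congr 1; omega
        have hpow2 : r ^ (N - 2 : ℕ) = r ^ (N - 3 : ℕ) * r := by
          rw [← pow_succ]; congr 1; omega
        have hpow3 : r ^ (N - 1 : ℕ) * (r^2)⁻¹ = r ^ (N - 3 : ℕ) := by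
          rw [hpow1]; field_simp
        have hP3 : (0:ℝ) < r ^ (N - 3 : ℕ) := pow_pos hr0 _
        have hlc : 0 ≤ lam^2 - c := by
          rw [hlam, hcdef]; nlinarith
        set p := φ r
        set q := deriv φ r
        have key : 0 ≤ r ^ (N - 3 : ℕ) * ((r*q + lam*p)^2 + (lam^2 - c)*p^2) :=
          mul_nonneg hP3.le (add_nonneg (sq_nonneg _) (mul_nonneg hlc (sq_nonneg _)))
        have expand : r ^ (N - 1 : ℕ) * (q ^ 2 - c * (r^2)⁻¹ * p ^ 2)
            + lam * ((((N-2:ℕ):ℝ) * r ^ (N - 3)) * (p * p) + r ^ (N - 2) * (q * p + p * q))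
            = r ^ (N - 3 : ℕ) * ((r*q + lam*p)^2 + (lam^2 - c)*p^2) := by
          rw [hcast, hpow1, hpow2, hlam]
          have hr2 : (r:ℝ)^2 ≠ 0 := by positivity
          field_simp
          ring
        linarith [expand ▸ key]
      · -- r ≥ M : everything vanishes
        have hmem : r ∉ tsupport φ := hnmem r fun hm => by
          have := hm.2; simp only [hM] at hrM; linarith
        rw [(hHzero r hmem).2, hIzero r hmem]
        simp
    -- conclude
    have hmono : (∫ r in Set.Ioi (0:ℝ), -deriv H r) ≤ ∫ r in Set.Ioi (0:ℝ), I r :=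
      integral_mono_ae hHint.neg hIint hae
    rw [integral_neg, hintH0, neg_zero] at hmono
    exact hmono
end

section
/- Let g ∈ C²((0,1];ℝ) satisfy g''(r) + ((N−1)/r)·g'(r) + r^α·f(g(r)) = 0 for all r ∈ (0,1]. Then for every r₀ ∈ (0,1) and every Lipschitz function v : (r₀,1) → ℝ with compact support in (r₀,1), one has the integration-by-parts identity ∫_{r₀}¹ t^{N−2+α}·f(g(t))·g'(t)·v(t)² dt = ∫_{r₀}¹ t^{N−1}·g'(t)²·( v(t)v'(t)/t − (N/2)·v(t)²/t² ) dt. -/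
open MeasureTheory Set Filter Topology

/-- FTC for Lipschitz functions: the integral of the (a.e.) derivative over `(a,b]`
equals `h b - h a`. -/
lemma lipschitz_ftc_s15 {h : ℝ → ℝ} {L : NNReal} (hh : LipschitzWith L h) {a b : ℝ} (hab : a ≤ b) :
    ∫ t in Set.Ioc a b, deriv h t = h b - h a := by
  have hc : Continuous h := hh.continuous
  set u : ℕ → ℝ := fun n => 1 / ((n : ℝ) + 1) with hu_def
  have hu_pos : ∀ n, 0 < u n := fun n => by positivity
  have hu_lim : Tendsto u atTop (𝓝 0) := tendsto_one_div_add_atTop_nhds_zero_nat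
  have hu_lim' : Tendsto u atTop (𝓝[≠] 0) := by
    apply tendsto_nhdsWithin_of_tendsto_nhds_of_eventually_within _ hu_lim
    exact Eventually.of_forall fun n => (hu_pos n).ne'
  set F : ℕ → ℝ → ℝ := fun n t => (u n)⁻¹ * (h (t + u n) - h t) with hF_def
  have hae : ∀ᵐ t ∂(volume.restrict (Set.Ioc a b)),
      Tendsto (fun n => F n t) atTop (𝓝 (deriv h t)) := by
    apply ae_restrict_of_ae
    filter_upwards [hh.ae_differentiableAt] with t ht
    have hd : HasDerivAt h (deriv h t) t := ht.hasDerivAt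
    rw [hasDerivAt_iff_tendsto_slope_zero] at hd
    exact hd.comp hu_lim'
  have hbound : ∀ n, ∀ᵐ t ∂(volume.restrict (Set.Ioc a b)), ‖F n t‖ ≤ (L : ℝ) := by
    intro n
    refine Eventually.of_forall fun t => ?_
    have h1 : |h (t + u n) - h t| ≤ (L : ℝ) * u n := by
      have := hh.dist_le_mul (t + u n) t
      simpa [Real.dist_eq, abs_of_pos (hu_pos n)] using this
    rw [Real.norm_eq_abs, hF_def, abs_mul, abs_inv, abs_of_pos (hu_pos n)]
    rw [inv_mul_le_iff₀ (hu_pos n)]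
    linarith [h1]
  have hmeas : ∀ n, AEStronglyMeasurable (F n) (volume.restrict (Set.Ioc a b)) := by
    intro n
    exact (continuous_const.mul
      ((hc.comp (continuous_id.add continuous_const)).sub hc)).aestronglyMeasurable
  have hbint : Integrable (fun _ : ℝ => (L : ℝ)) (volume.restrict (Set.Ioc a b)) := by
    apply integrable_const
  have hDCT := MeasureTheory.tendsto_integral_of_dominated_convergence
    (fun _ => (L : ℝ)) hmeas hbint hbound hae
  have hint : ∀ n, ∫ t in Set.Ioc a b, F n t =
      (u n)⁻¹ * ((∫ t in b..(b + u n), h t) - ∫ t in a..(a + u n), h t) := by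
    intro n
    have h1 : ∫ t in Set.Ioc a b, F n t = ∫ t in a..b, F n t :=
      (intervalIntegral.integral_of_le hab).symm
    rw [h1, hF_def]
    have hi1 : IntervalIntegrable (fun t => h (t + u n)) volume a b :=
      (hc.comp (continuous_id.add continuous_const)).intervalIntegrable a b
    have hi2 : IntervalIntegrable h volume a b := hc.intervalIntegrable a b
    rw [intervalIntegral.integral_const_mul, intervalIntegral.integral_sub hi1 hi2]
    rw [intervalIntegral.integral_comp_add_right h (u n)]
    have key : (∫ t in (a + u n)..(b + u n), h t) - ∫ t in a..b, h t =
        (∫ t in b..(b + u n), h t) - ∫ t in a..(a + u n), h t := by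
      have e1 : (∫ t in a..(a + u n), h t) + ∫ t in (a + u n)..(b + u n), h t
          = ∫ t in a..(b + u n), h t :=
        intervalIntegral.integral_add_adjacent_intervals (hc.intervalIntegrable _ _)
          (hc.intervalIntegrable _ _)
      have e2 : (∫ t in a..b, h t) + ∫ t in b..(b + u n), h t = ∫ t in a..(b + u n), h t :=
        intervalIntegral.integral_add_adjacent_intervals (hc.intervalIntegrable _ _)
          (hc.intervalIntegrable _ _)
      linarith
    rw [key]
  have hend : ∀ c : ℝ, Tendsto (fun n => (u n)⁻¹ * ∫ t in c..(c + u n), h t) atTop (𝓝 (h c)) := by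
    intro c
    have hH : HasDerivAt (fun x => ∫ t in c..x, h t) (h c) c :=
      (hc.integral_hasStrictDerivAt c c).hasDerivAt
    rw [hasDerivAt_iff_tendsto_slope_zero] at hH
    have := hH.comp hu_lim'
    simpa [Function.comp_def, intervalIntegral.integral_same, smul_eq_mul] using this
  have hlim2 : Tendsto (fun n => ∫ t in Set.Ioc a b, F n t) atTop (𝓝 (h b - h a)) := by
    refine ((hend b).sub (hend a)).congr fun n => ?_
    rw [hint n, mul_sub]
  exact tendsto_nhds_unique hDCT hlim2

/-- The product of two bounded Lipschitz functions is Lipschitz. -/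
lemma lipschitzWith_mul_of_bounded {p q : ℝ → ℝ} {Kp Kq : NNReal} {A B : ℝ}
    (hp : LipschitzWith Kp p) (hq : LipschitzWith Kq q)
    (hA : ∀ x, |p x| ≤ A) (hB : ∀ x, |q x| ≤ B) :
    ∃ K : NNReal, LipschitzWith K (fun x => p x * q x) := by
  refine ⟨Real.toNNReal (A * Kq + B * Kp), LipschitzWith.of_dist_le_mul fun x y => ?_⟩
  have h1 := hp.dist_le_mul x y
  have h2 := hq.dist_le_mul x y
  simp only [Real.dist_eq] at h1 h2 ⊢
  have hA0 : 0 ≤ A := le_trans (abs_nonneg _) (hA x)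
  have hB0 : 0 ≤ B := le_trans (abs_nonneg _) (hB y)
  have hC : (A * (Kq : ℝ) + B * (Kp : ℝ)) ≤ ((A * (Kq : ℝ) + B * (Kp : ℝ)).toNNReal : ℝ) :=
    Real.le_coe_toNNReal _
  have key : |p x * q x - p y * q y| ≤ (A * (Kq : ℝ) + B * (Kp : ℝ)) * |x - y| := by
    have e : p x * q x - p y * q y = p x * (q x - q y) + q y * (p x - p y) := by ring
    rw [e]
    calc |p x * (q x - q y) + q y * (p x - p y)|
        ≤ |p x * (q x - q y)| + |q y * (p x - p y)| := abs_add_le _ _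
      _ = |p x| * |q x - q y| + |q y| * |p x - p y| := by rw [abs_mul, abs_mul]
      _ ≤ A * ((Kq : ℝ) * |x - y|) + B * ((Kp : ℝ) * |x - y|) := by
          gcongr <;> [exact hA x; exact hB y]
      _ = (A * (Kq : ℝ) + B * (Kp : ℝ)) * |x - y| := by ring
  nlinarith [abs_nonneg (x - y), key, hC]

/-- The derivative of a Lipschitz function is bounded by the Lipschitz constant. -/
lemma abs_deriv_le_of_lipschitz {w : ℝ → ℝ} {L : NNReal} (hw : LipschitzWith L w) (t : ℝ) :
    |deriv w t| ≤ (L : ℝ) := by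
  by_cases hd : DifferentiableAt ℝ w t
  · have h1 : HasFDerivAt w (ContinuousLinearMap.smulRight (1 : ℝ →L[ℝ] ℝ) (deriv w t)) t :=
      hasDerivAt_iff_hasFDerivAt.mp hd.hasDerivAt
    have h2 := h1.le_of_lipschitz hw
    rw [ContinuousLinearMap.norm_smulRight_apply] at h2
    simpa [ContinuousLinearMap.one_def, ContinuousLinearMap.norm_id, Real.norm_eq_abs] using h2
  · rw [deriv_zero_of_not_differentiableAt hd]
    simp

lemma alg_identity (n pa t P F G G2 V V' : ℝ) (ht : t ≠ 0)
    (hode : G2 + (n - 1) / t * G + pa * F = 0) :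
    pa * (t * P) * F * G * V ^ 2 =
      (t * t * P) * G ^ 2 * (V * V' / t - (n / 2) * V ^ 2 / (t * t))
        - (1 / 2) * ((((n - 2) * P * G ^ 2 + (t * P) * (2 * G * G2)) * (V * V))
          + (t * P * G ^ 2) * (V' * V + V * V')) := by
  have h' : G2 * t + (n - 1) * G + pa * F * t = 0 := by
    field_simp at hode
    linarith
  have hu : t * t⁻¹ = 1 := mul_inv_cancel₀ ht
  linear_combination (P * G * V ^ 2) * h' +
    (-(t * P * G ^ 2 * V * V') + (n / 2) * P * G ^ 2 * V ^ 2 * (t * t⁻¹ + 1)) * hu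

set_option maxHeartbeats 1000000 in
/-- Integration-by-parts identity for radial solutions: for every `r₀ ∈ (0,1)` and every
Lipschitz `v` with compact support in `(r₀,1)`,
`∫_{r₀}¹ t^{N-2+α} f(g(t)) g'(t) v² dt = ∫_{r₀}¹ t^{N-1} g'(t)² (vv'/t - (N/2) v²/t²) dt`. -/
theorem integration_by_parts_identity (N : ℕ) (α : ℝ) (hN : 2 ≤ N) (hα : -2 < α)
    (f g : ℝ → ℝ) (hf : ContDiff ℝ 1 f) (hg : ContDiffOn ℝ 2 g (Set.Ioc 0 1))
    (heq : ∀ r ∈ Set.Ioc (0:ℝ) 1,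
      deriv (deriv g) r + ((N : ℝ) - 1) / r * deriv g r + r ^ α * f (g r) = 0)
    (r₀ : ℝ) (hr₀ : r₀ ∈ Set.Ioo (0:ℝ) 1)
    (v : ℝ → ℝ) (hv : ∃ K, LipschitzWith K v) (hvsupp : HasCompactSupport v)
    (hvsub : tsupport v ⊆ Set.Ioo r₀ 1) :
    (∫ t in Set.Ioc r₀ 1, t ^ ((N : ℝ) - 2 + α) * f (g t) * deriv g t * (v t) ^ 2) =
      ∫ t in Set.Ioc r₀ 1, t ^ ((N : ℝ) - 1) * (deriv g t) ^ 2 *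
        (v t * deriv v t / t - ((N : ℝ) / 2) * (v t) ^ 2 / t ^ 2) := by
  obtain ⟨Lv, hvL⟩ := hv
  obtain ⟨hr₀0, hr₀1⟩ := hr₀
  by_cases hKe : tsupport v = ∅
  · have hv0 : ∀ x, v x = 0 := fun x =>
      image_eq_zero_of_notMem_tsupport (by rw [hKe]; exact notMem_empty x)
    simp [hv0]
  have hne : (tsupport v).Nonempty := nonempty_iff_ne_empty.mpr hKe
  have hKc : IsCompact (tsupport v) := hvsupp
  set c := sInf (tsupport v) with hc_def
  set d := sSup (tsupport v) with hd_def
  have hcK : c ∈ tsupport v := hKc.sInf_mem hne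
  have hdK : d ∈ tsupport v := hKc.sSup_mem hne
  have hcmem : c ∈ Set.Ioo r₀ 1 := hvsub hcK
  have hdmem : d ∈ Set.Ioo r₀ 1 := hvsub hdK
  set c' := (r₀ + c) / 2 with hc'_def
  set d' := (d + 1) / 2 with hd'_def
  have hc'0 : 0 < c' := by rw [hc'_def]; linarith [hcmem.1]
  have hr₀c' : r₀ < c' := by rw [hc'_def]; linarith [hcmem.1]
  have hc'c : c' < c := by rw [hc'_def]; linarith [hcmem.1]
  have hdd' : d < d' := by rw [hd'_def]; linarith [hdmem.2]
  have hd'1 : d' < 1 := by rw [hd'_def]; linarith [hdmem.2]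
  have hcd : c ≤ d := le_csSup hKc.bddAbove hcK
  have hc'd' : c' ≤ d' := by linarith
  have hsub01 : Set.Icc c' d' ⊆ Set.Ioo (0:ℝ) 1 := fun x hx =>
    ⟨lt_of_lt_of_le hc'0 hx.1, lt_of_le_of_lt hx.2 hd'1⟩
  have hKsub : tsupport v ⊆ Set.Ioo c' d' := fun x hx =>
    ⟨lt_of_lt_of_le hc'c (csInf_le hKc.bddBelow hx),
     lt_of_le_of_lt (le_csSup hKc.bddAbove hx) hdd'⟩
  -- derivatives of g
  have hg2 : ContDiffOn ℝ 2 g (Set.Ioo 0 1) := hg.mono Set.Ioo_subset_Ioc_self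
  have hg' : ContDiffOn ℝ 1 (deriv g) (Set.Ioo 0 1) :=
    hg2.deriv_of_isOpen isOpen_Ioo (by norm_num)
  have hdg_cont : ContinuousOn (deriv g) (Set.Ioo 0 1) := hg'.continuousOn
  have hddg_cont : ContinuousOn (deriv (deriv g)) (Set.Ioo 0 1) :=
    hg'.continuousOn_deriv_of_isOpen isOpen_Ioo le_rfl
  have hder_g : ∀ t ∈ Set.Ioo (0:ℝ) 1, HasDerivAt (deriv g) (deriv (deriv g) t) t := fun t ht =>
    ((hg'.differentiableOn one_ne_zero).differentiableAt (isOpen_Ioo.mem_nhds ht)).hasDerivAt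
  set ψ : ℝ → ℝ := fun t => t ^ ((N:ℝ) - 2) * (deriv g t) ^ 2 with hψ_def
  set ψ' : ℝ → ℝ := fun t => ((N:ℝ) - 2) * t ^ ((N:ℝ) - 3) * (deriv g t) ^ 2
      + t ^ ((N:ℝ) - 2) * (2 * deriv g t * deriv (deriv g) t) with hψ'_def
  have hψd : ∀ t ∈ Set.Ioo (0:ℝ) 1, HasDerivAt ψ (ψ' t) t := by
    intro t ht
    have h1 : HasDerivAt (fun s : ℝ => s ^ ((N:ℝ) - 2)) (((N:ℝ) - 2) * t ^ ((N:ℝ) - 2 - 1)) t :=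
      Real.hasDerivAt_rpow_const (Or.inl ht.1.ne')
    rw [show (N:ℝ) - 2 - 1 = (N:ℝ) - 3 by ring] at h1
    have h2 : HasDerivAt (fun s => (deriv g s) ^ 2) (2 * deriv g t * deriv (deriv g) t) t := by
      have := (hder_g t ht).fun_pow 2
      simpa using this
    simpa [hψ_def, hψ'_def] using h1.fun_mul h2
  have hrpow_cont : ∀ q : ℝ, ContinuousOn (fun t : ℝ => t ^ q) (Set.Ioo 0 1) := fun q =>
    continuousOn_id.rpow_const fun x hx => Or.inl (ne_of_gt hx.1)
  have hψcont : ContinuousOn ψ (Set.Ioo 0 1) := (hrpow_cont _).mul (hdg_cont.pow 2)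
  have hψ'cont : ContinuousOn ψ' (Set.Ioo 0 1) := by
    apply ContinuousOn.add
    · exact (continuousOn_const.mul (hrpow_cont _)).mul (hdg_cont.pow 2)
    · exact (hrpow_cont _).mul ((continuousOn_const.mul hdg_cont).mul hddg_cont)
  -- Lipschitz bound for ψ on Icc c' d'
  obtain ⟨C1, hC1⟩ := isCompact_Icc.exists_bound_of_continuousOn (hψ'cont.mono hsub01)
  have hC1nn : 0 ≤ C1 := le_trans (norm_nonneg _) (hC1 c' ⟨le_rfl, hc'd'⟩)
  have hψlip : LipschitzOnWith (Real.toNNReal C1) ψ (Set.Icc c' d') := by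
    refine Convex.lipschitzOnWith_of_nnnorm_deriv_le
      (fun x hx => (hψd x (hsub01 hx)).differentiableAt) (fun x hx => ?_) (convex_Icc c' d')
    rw [Real.le_toNNReal_iff_coe_le hC1nn, coe_nnnorm, (hψd x (hsub01 hx)).deriv]
    exact hC1 x hx
  obtain ⟨φ₀, hφ₀L, hφ₀eq⟩ := hψlip.extend_real
  set clamp : ℝ → ℝ := fun x => max (min x d') c' with hclamp_def
  have hclampL : LipschitzWith 1 clamp := by
    have := (LipschitzWith.id.min_const d').max_const c'
    simpa [hclamp_def] using this
  have hclamp_mem : ∀ x, clamp x ∈ Set.Icc c' d' := fun x =>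
    ⟨le_max_right _ _, max_le (min_le_right _ _) hc'd'⟩
  have hclamp_id : ∀ x ∈ Set.Icc c' d', clamp x = x := fun x hx => by
    rw [hclamp_def]; simp only []; rw [min_eq_left hx.2, max_eq_left hx.1]
  set φ : ℝ → ℝ := fun x => φ₀ (clamp x) with hφ_def
  have hφL : LipschitzWith (Real.toNNReal C1 * 1) φ := hφ₀L.comp hclampL
  have hφeq : ∀ x ∈ Set.Icc c' d', φ x = ψ x := fun x hx => by
    rw [hφ_def]; simp only []; rw [hclamp_id x hx]; exact (hφ₀eq hx).symm
  obtain ⟨C2, hC2⟩ := isCompact_Icc.exists_bound_of_continuousOn (hψcont.mono hsub01)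
  have hφbd : ∀ x, |φ x| ≤ C2 := fun x => by
    rw [hφ_def]; simp only []
    rw [← hφ₀eq (hclamp_mem x)]
    exact hC2 _ (hclamp_mem x)
  -- v bounds
  obtain ⟨Cv, hCv⟩ := hvsupp.exists_bound_of_continuous hvL.continuous
  have hCv' : ∀ x, |v x| ≤ Cv := fun x => hCv x
  have hCv0 : 0 ≤ Cv := le_trans (abs_nonneg _) (hCv' 0)
  obtain ⟨Kv2, hv2L⟩ := lipschitzWith_mul_of_bounded hvL hvL hCv' hCv'
  have hv2bd : ∀ x, |v x * v x| ≤ Cv * Cv := fun x => by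
    rw [abs_mul]; exact mul_le_mul (hCv' x) (hCv' x) (abs_nonneg _) hCv0
  obtain ⟨Kh, hhL⟩ := lipschitzWith_mul_of_bounded hφL hv2L hφbd hv2bd
  set h : ℝ → ℝ := fun x => φ x * (v x * v x) with hh_def
  have hv_r₀ : v r₀ = 0 :=
    image_eq_zero_of_notMem_tsupport (fun hmem => lt_irrefl r₀ (hvsub hmem).1)
  have hv_1 : v 1 = 0 :=
    image_eq_zero_of_notMem_tsupport (fun hmem => lt_irrefl 1 (hvsub hmem).2)
  have hFTC : ∫ t in Set.Ioc r₀ 1, deriv h t = 0 := by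
    have e1 : h 1 = 0 := by rw [hh_def]; simp [hv_1]
    have e2 : h r₀ = 0 := by rw [hh_def]; simp [hv_r₀]
    rw [lipschitz_ftc_s15 hhL (le_of_lt hr₀1), e1, e2, sub_zero]
  -- the a.e. identity
  have hone : ∀ᵐ t : ℝ ∂volume, t ≠ (1:ℝ) := by
    have h0 : volume ({(1:ℝ)} : Set ℝ) = 0 := Real.volume_singleton
    filter_upwards [compl_mem_ae_iff.mpr h0] with t ht
    simpa using ht
  have hae : ∀ᵐ t ∂(volume.restrict (Set.Ioc r₀ 1)),
      t ^ ((N:ℝ) - 2 + α) * f (g t) * deriv g t * (v t) ^ 2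
        = t ^ ((N:ℝ) - 1) * (deriv g t) ^ 2 *
            (v t * deriv v t / t - ((N:ℝ)/2) * (v t) ^ 2 / t ^ 2)
          - (1/2) * deriv h t := by
    filter_upwards [ae_restrict_mem measurableSet_Ioc, ae_restrict_of_ae hone,
      ae_restrict_of_ae hvL.ae_differentiableAt] with t htmem ht1 htv
    have ht0 : (0:ℝ) < t := lt_trans hr₀0 htmem.1
    have htlt1 : t < 1 := lt_of_le_of_ne htmem.2 ht1
    by_cases htK : t ∈ tsupport v
    · have ht01 : t ∈ Set.Ioo (0:ℝ) 1 := ⟨ht0, htlt1⟩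
      have htc'd' : t ∈ Set.Ioo c' d' := hKsub htK
      have hvd : HasDerivAt v (deriv v t) t := htv.hasDerivAt
      have hev : h =ᶠ[𝓝 t] fun s => ψ s * (v s * v s) := by
        filter_upwards [isOpen_Ioo.mem_nhds htc'd'] with s hs
        rw [hh_def]; simp only []
        rw [hφeq s (Set.mem_Icc_of_Ioo hs)]
      have hdh : deriv h t = ψ' t * (v t * v t) + ψ t * (deriv v t * v t + v t * deriv v t) := by
        rw [hev.deriv_eq]
        exact ((hψd t ht01).mul (hvd.mul hvd)).deriv
      have hode := heq t ⟨ht0, le_of_lt htlt1⟩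
      have e1 : t ^ ((N:ℝ) - 2 + α) = t ^ α * (t * t ^ ((N:ℝ) - 3)) := by
        rw [show (N:ℝ) - 2 + α = α + (1 + ((N:ℝ) - 3)) by ring, Real.rpow_add ht0,
          Real.rpow_add ht0, Real.rpow_one]
      have e2 : t ^ ((N:ℝ) - 1) = t * t * t ^ ((N:ℝ) - 3) := by
        rw [show (N:ℝ) - 1 = 1 + (1 + ((N:ℝ) - 3)) by ring, Real.rpow_add ht0,
          Real.rpow_add ht0, Real.rpow_one]; ring
      have e3 : t ^ ((N:ℝ) - 2) = t * t ^ ((N:ℝ) - 3) := by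
        rw [show (N:ℝ) - 2 = 1 + ((N:ℝ) - 3) by ring, Real.rpow_add ht0, Real.rpow_one]
      rw [hdh]
      simp only [hψ_def, hψ'_def]
      rw [e1, e2, e3, show t ^ (2:ℕ) = t * t from sq t]
      exact alg_identity ((N:ℝ)) (t ^ α) t (t ^ ((N:ℝ) - 3)) (f (g t)) (deriv g t)
        (deriv (deriv g) t) (v t) (deriv v t) ht0.ne' (by linarith [hode])
    · have hvt : v t = 0 := image_eq_zero_of_notMem_tsupport htK
      have hv't : deriv v t = 0 := by
        by_contra hne'
        exact htK (support_deriv_subset (by simpa [Function.mem_support] using hne'))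
      have hdh : deriv h t = 0 := by
        have hev : h =ᶠ[𝓝 t] fun _ => (0:ℝ) := by
          filter_upwards [(isClosed_tsupport v).isOpen_compl.mem_nhds htK] with s hs
          rw [hh_def]; simp [image_eq_zero_of_notMem_tsupport hs]
        rw [hev.deriv_eq]; simp
      simp [hvt, hv't, hdh]
  -- measurability
  have hioc01 : Set.Ioc r₀ 1 ⊆ Set.Ioc (0:ℝ) 1 := Set.Ioc_subset_Ioc (le_of_lt hr₀0) le_rfl
  have hrpow_contIoc : ∀ q : ℝ, ContinuousOn (fun t : ℝ => t ^ q) (Set.Ioc r₀ 1) := fun q =>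
    continuousOn_id.rpow_const fun x hx => Or.inl (ne_of_gt (lt_trans hr₀0 hx.1))
  have hfg_cont : ContinuousOn (fun t => f (g t)) (Set.Ioc r₀ 1) :=
    hf.continuous.comp_continuousOn (hg.continuousOn.mono hioc01)
  have hmesA : AEStronglyMeasurable
      (fun t => t ^ ((N:ℝ) - 2 + α) * f (g t) * deriv g t * (v t) ^ 2)
      (volume.restrict (Set.Ioc r₀ 1)) := by
    have m1 : AEStronglyMeasurable (fun t : ℝ => t ^ ((N:ℝ) - 2 + α))
        (volume.restrict (Set.Ioc r₀ 1)) :=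
      (hrpow_contIoc _).aestronglyMeasurable measurableSet_Ioc
    have m2 : AEStronglyMeasurable (fun t : ℝ => f (g t))
        (volume.restrict (Set.Ioc r₀ 1)) :=
      hfg_cont.aestronglyMeasurable measurableSet_Ioc
    have m3 : AEStronglyMeasurable (deriv g) (volume.restrict (Set.Ioc r₀ 1)) :=
      (measurable_deriv g).aestronglyMeasurable.restrict
    have m4 : AEStronglyMeasurable (fun t : ℝ => (v t) ^ 2)
        (volume.restrict (Set.Ioc r₀ 1)) :=
      (hvL.continuous.measurable.pow_const 2).aestronglyMeasurable.restrict
    exact ((m1.mul m2).mul m3).mul m4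
  have hmesB : AEStronglyMeasurable
      (fun t => t ^ ((N:ℝ) - 1) * (deriv g t) ^ 2 *
        (v t * deriv v t / t - ((N:ℝ)/2) * (v t) ^ 2 / t ^ 2))
      (volume.restrict (Set.Ioc r₀ 1)) := by
    have m1 : AEStronglyMeasurable (fun t : ℝ => t ^ ((N:ℝ) - 1))
        (volume.restrict (Set.Ioc r₀ 1)) :=
      (hrpow_contIoc _).aestronglyMeasurable measurableSet_Ioc
    have m2 : AEStronglyMeasurable (fun t : ℝ => (deriv g t) ^ 2)
        (volume.restrict (Set.Ioc r₀ 1)) :=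
      ((measurable_deriv g).pow_const 2).aestronglyMeasurable.restrict
    have m3 : AEStronglyMeasurable (fun t : ℝ => v t * deriv v t / t)
        (volume.restrict (Set.Ioc r₀ 1)) :=
      ((hvL.continuous.measurable.mul (measurable_deriv v)).div
        measurable_id).aestronglyMeasurable.restrict
    have m4 : AEStronglyMeasurable (fun t : ℝ => ((N:ℝ)/2) * (v t) ^ 2 / t ^ 2)
        (volume.restrict (Set.Ioc r₀ 1)) :=
      ((measurable_const.mul (hvL.continuous.measurable.pow_const 2)).div
        (measurable_id.pow_const 2)).aestronglyMeasurable.restrict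
    exact (m1.mul m2).mul (m3.sub m4)
  -- bounds and integrability
  have hmeasIoc : volume (Set.Ioc r₀ (1:ℝ)) ≠ ⊤ := measure_Ioc_lt_top.ne
  obtain ⟨C3, hC3⟩ := isCompact_Icc.exists_bound_of_continuousOn
    ((((hrpow_cont ((N:ℝ) - 2 + α)).mul ((hf.continuous.comp_continuousOn
      (hg.continuousOn.mono Set.Ioo_subset_Ioc_self)))).mul hdg_cont).mono hsub01)
  have hC3nn : 0 ≤ C3 := le_trans (norm_nonneg _) (hC3 c' ⟨le_rfl, hc'd'⟩)
  obtain ⟨C4, hC4⟩ := isCompact_Icc.exists_bound_of_continuousOn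
    (((hrpow_cont ((N:ℝ) - 1)).mul (hdg_cont.pow 2)).mono hsub01)
  have hC4nn : 0 ≤ C4 := le_trans (norm_nonneg _) (hC4 c' ⟨le_rfl, hc'd'⟩)
  have hN2 : (0:ℝ) ≤ (N:ℝ) / 2 := by positivity
  set CB : ℝ := C4 * (Cv * Lv / c' + ((N:ℝ)/2) * (Cv * Cv) / (c' * c')) with hCB_def
  have hintA : IntegrableOn
      (fun t => t ^ ((N:ℝ) - 2 + α) * f (g t) * deriv g t * (v t) ^ 2)
      (Set.Ioc r₀ 1) volume := by
    refine ⟨hmesA, HasFiniteIntegral.restrict_of_bounded (C := C3 * (Cv * Cv))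
      measure_Ioc_lt_top (Eventually.of_forall fun t => ?_)⟩
    by_cases htK : t ∈ tsupport v
    · have htmem : t ∈ Set.Icc c' d' := Set.mem_Icc_of_Ioo (hKsub htK)
      have h1 := hC3 t htmem
      rw [Real.norm_eq_abs] at h1 ⊢
      rw [abs_mul]
      have h2 : |(v t) ^ 2| ≤ Cv * Cv := by
        rw [show (v t)^2 = v t * v t from sq (v t)]; exact hv2bd t
      exact mul_le_mul h1 h2 (abs_nonneg _) hC3nn
    · have hvt : v t = 0 := image_eq_zero_of_notMem_tsupport htK
      have hz : (v t) ^ 2 = 0 := by rw [hvt]; norm_num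
      rw [Real.norm_eq_abs, hz, mul_zero, abs_zero]
      positivity
  have hintB : IntegrableOn
      (fun t => t ^ ((N:ℝ) - 1) * (deriv g t) ^ 2 *
        (v t * deriv v t / t - ((N:ℝ)/2) * (v t) ^ 2 / t ^ 2))
      (Set.Ioc r₀ 1) volume := by
    refine ⟨hmesB, HasFiniteIntegral.restrict_of_bounded (C := CB)
      measure_Ioc_lt_top (Eventually.of_forall fun t => ?_)⟩
    by_cases htK : t ∈ tsupport v
    · have htmem : t ∈ Set.Icc c' d' := Set.mem_Icc_of_Ioo (hKsub htK)
      have ht0 : (0:ℝ) < t := lt_of_lt_of_le hc'0 htmem.1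
      have htc' : c' ≤ t := htmem.1
      have h1 := hC4 t htmem
      rw [Real.norm_eq_abs] at h1 ⊢
      rw [abs_mul]
      have h2 : |v t * deriv v t / t - ((N:ℝ)/2) * (v t) ^ 2 / t ^ 2|
          ≤ Cv * Lv / c' + ((N:ℝ)/2) * (Cv * Cv) / (c' * c') := by
        have h21 : |v t * deriv v t / t| ≤ Cv * Lv / c' := by
          rw [abs_div, abs_mul, abs_of_pos ht0]
          exact div_le_div₀ (by positivity)
            (mul_le_mul (hCv' t) (abs_deriv_le_of_lipschitz hvL t) (abs_nonneg _) hCv0)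
            hc'0 htc'
        have h22 : |((N:ℝ)/2) * (v t) ^ 2 / t ^ 2| ≤ ((N:ℝ)/2) * (Cv * Cv) / (c' * c') := by
          rw [abs_div, abs_mul]
          have ht2 : |t ^ 2| = t * t := by
            rw [abs_of_pos (by positivity)]; ring
          rw [ht2, abs_of_nonneg hN2]
          refine div_le_div₀ (by positivity) ?_ (by positivity) ?_
          · refine mul_le_mul le_rfl ?_ (abs_nonneg _) hN2
            rw [show (v t)^2 = v t * v t from sq (v t)]
            exact hv2bd t
          · exact mul_le_mul htc' htc' (le_of_lt hc'0) (le_of_lt ht0)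
        calc |v t * deriv v t / t - ((N:ℝ)/2) * (v t) ^ 2 / t ^ 2|
            ≤ |v t * deriv v t / t| + |((N:ℝ)/2) * (v t) ^ 2 / t ^ 2| := abs_sub _ _
          _ ≤ Cv * Lv / c' + ((N:ℝ)/2) * (Cv * Cv) / (c' * c') := add_le_add h21 h22
      rw [hCB_def]
      exact mul_le_mul h1 h2 (abs_nonneg _) hC4nn
    · have hvt : v t = 0 := image_eq_zero_of_notMem_tsupport htK
      have hv't : deriv v t = 0 := by
        by_contra hne'
        exact htK (support_deriv_subset (by simpa [Function.mem_support] using hne'))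
      have hz : v t * deriv v t / t - ((N:ℝ)/2) * (v t) ^ 2 / t ^ 2 = 0 := by
        rw [hvt, hv't]; norm_num
      rw [Real.norm_eq_abs, hz, mul_zero, abs_zero, hCB_def]
      positivity
  have hintD : IntegrableOn (deriv h) (Set.Ioc r₀ 1) volume := by
    have md : AEStronglyMeasurable (deriv h) (volume.restrict (Set.Ioc r₀ 1)) :=
      (measurable_deriv h).aestronglyMeasurable.restrict
    refine ⟨md, HasFiniteIntegral.restrict_of_bounded (C := (Kh : ℝ))
      measure_Ioc_lt_top (Eventually.of_forall fun t => ?_)⟩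
    rw [Real.norm_eq_abs]
    exact abs_deriv_le_of_lipschitz hhL t
  -- conclusion
  calc (∫ t in Set.Ioc r₀ 1, t ^ ((N:ℝ) - 2 + α) * f (g t) * deriv g t * (v t) ^ 2)
      = ∫ t in Set.Ioc r₀ 1, (t ^ ((N:ℝ) - 1) * (deriv g t) ^ 2 *
          (v t * deriv v t / t - ((N:ℝ)/2) * (v t) ^ 2 / t ^ 2) - (1/2) * deriv h t) :=
        integral_congr_ae hae
    _ = (∫ t in Set.Ioc r₀ 1, t ^ ((N:ℝ) - 1) * (deriv g t) ^ 2 *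
          (v t * deriv v t / t - ((N:ℝ)/2) * (v t) ^ 2 / t ^ 2))
        - ∫ t in Set.Ioc r₀ 1, (1/2) * deriv h t :=
        integral_sub hintB (hintD.const_mul _)
    _ = _ := by
        rw [MeasureTheory.integral_const_mul, hFTC]
        ring
end

section
/- Let g be a semi-stable radial H¹ solution of −Δu = |x|^α f(u) in the punctured unit ball. Then for every continuously differentiable function v : (0,1) → ℝ with compact support in (0,1), one has ∫₀¹ t^{N−1}·( g'(t)²·v'(t)² − (N−1)·g'(t)²·v(t)²/t² ) dt ≥ −α·∫₀¹ t^{N−2+α}·f(g(t))·g'(t)·v(t)² dt. -/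
open MeasureTheory Set

private lemma aux_integrableOn {a b : ℝ} (hab : Icc a b ⊆ Ioo 0 1) (X : ℝ → ℝ)
    (hc : ContinuousOn X (Ioo 0 1)) (hz : ∀ r ∉ Icc a b, X r = 0) :
    IntegrableOn X (Ioo 0 1) := by
  have h1 : IntegrableOn X (Icc a b) := (hc.mono hab).integrableOn_compact isCompact_Icc
  have h2 : IntegrableOn X (Ioo 0 1 \ Icc a b) := by
    apply Integrable.congr (integrableOn_zero)
    apply (ae_restrict_iff' (measurableSet_Ioo.diff measurableSet_Icc)).2
    exact Filter.Eventually.of_forall fun r hr => (hz r hr.2).symm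
  exact (h1.union h2).mono_set (fun x hx => by
    by_cases h : x ∈ Icc a b
    · exact Or.inl h
    · exact Or.inr ⟨hx, h⟩)

/-- Intermediate inequality in the proof of the key lemma: for every `C¹` function `v` with
compact support in `(0,1)`,
`∫₀¹ t^{N-1}(g'² v'² - (N-1) g'² v²/t²) dt ≥ -α ∫₀¹ t^{N-2+α} f(g) g' v² dt`. -/
theorem intermediate_inequality (N : ℕ) (α : ℝ) (hN : 2 ≤ N) (hα : -2 < α)
    (f g : ℝ → ℝ) (hf : ContDiff ℝ 1 f) (hsol : IsRadialH1Solution N α f g)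
    (hstab : IsSemiStable N α f g)
    (v : ℝ → ℝ) (hv : ContDiff ℝ 1 v) (hvsupp : HasCompactSupport v)
    (hvsub : tsupport v ⊆ Set.Ioo 0 1) :
    -α * (∫ t in Set.Ioo (0:ℝ) 1,
        t ^ ((N : ℝ) - 2 + α) * f (g t) * deriv g t * (v t) ^ 2) ≤
      ∫ t in Set.Ioo (0:ℝ) 1,
        t ^ ((N : ℝ) - 1) * ((deriv g t) ^ 2 * (deriv v t) ^ 2 -
          ((N : ℝ) - 1) * (deriv g t) ^ 2 * (v t) ^ 2 / t ^ 2) := by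
  obtain ⟨hg, hode, -⟩ := hsol
  -- a compact interval containing the support of v
  obtain ⟨a, b, ha, hb, hab, hsub⟩ :
      ∃ a b : ℝ, 0 < a ∧ b < 1 ∧ a ≤ b ∧ tsupport v ⊆ Icc a b := by
    by_cases h : tsupport v = ∅
    · exact ⟨1/2, 1/2, by norm_num, by norm_num, le_rfl, by simp [h]⟩
    · have hne : (tsupport v).Nonempty := nonempty_iff_ne_empty.2 h
      have hK : IsCompact (tsupport v) := hvsupp
      refine ⟨sInf (tsupport v), sSup (tsupport v),
        (hvsub (hK.sInf_mem hne)).1, (hvsub (hK.sSup_mem hne)).2,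
        csInf_le_csSup hne hK.bddBelow hK.bddAbove,
        fun x hx => ⟨csInf_le hK.bddBelow hx, le_csSup hK.bddAbove hx⟩⟩
  set a' : ℝ := a / 2 with ha'def
  set b' : ℝ := (b + 1) / 2 with hb'def
  have ha' : 0 < a' := by positivity
  have ha'a : a' < a := by simp [ha'def]; linarith
  have hbb' : b < b' := by simp [hb'def]; linarith
  have hb'1 : b' < 1 := by simp [hb'def]; linarith
  have ha'b' : a' ≤ b' := by linarith
  have hIccS : Icc a b ⊆ Ioo 0 1 := fun x hx => ⟨lt_of_lt_of_le ha hx.1, lt_of_le_of_lt hx.2 hb⟩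
  have hIccS' : Icc a' b' ⊆ Ioo 0 1 := fun x hx => ⟨lt_of_lt_of_le ha' hx.1, lt_of_le_of_lt hx.2 hb'1⟩
  -- basic smoothness on S = Ioo 0 1
  set S : Set ℝ := Ioo (0:ℝ) 1 with hS
  have hg2 : ContDiffOn ℝ 2 g S := hg.mono Ioo_subset_Ioc_self
  have hG1 : ContDiffOn ℝ 1 (deriv g) S := hg2.deriv_of_isOpen isOpen_Ioo (by norm_num)
  have hmem : ∀ r ∈ S, S ∈ nhds r := fun r hr => isOpen_Ioo.mem_nhds hr
  have hdg : ∀ r ∈ S, HasDerivAt g (deriv g r) r := fun r hr =>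
    (((hg2.differentiableOn (by norm_num)).differentiableAt (hmem r hr))).hasDerivAt
  have hdG1 : ∀ r ∈ S, HasDerivAt (deriv g) (deriv (deriv g) r) r := fun r hr =>
    ((hG1.differentiableOn (by norm_num)).differentiableAt (hmem r hr)).hasDerivAt
  have contG1 : ContinuousOn (deriv g) S := hG1.continuousOn
  have contG2 : ContinuousOn (deriv (deriv g)) S :=
    hG1.continuousOn_deriv_of_isOpen isOpen_Ioo le_rfl
  have contdv : Continuous (deriv v) := hv.continuous_deriv le_rfl
  have contdf : Continuous (deriv f) := hf.continuous_deriv le_rfl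
  have contfg : ContinuousOn (fun r => f (g r)) S := hf.continuous.comp_continuousOn hg2.continuousOn
  have contdfg : ContinuousOn (fun r => deriv f (g r)) S := contdf.comp_continuousOn hg2.continuousOn
  have contRpow : ∀ c : ℝ, ContinuousOn (fun r : ℝ => r ^ c) S := fun c r hr =>
    (Real.continuousAt_rpow_const r c (Or.inl (ne_of_gt hr.1))).continuousWithinAt
  have ode : ∀ r ∈ S, deriv (deriv g) r
      = -(((N:ℝ)-1) / r * deriv g r) - r ^ α * f (g r) := by
    intro r hr
    have := hode r (Ioo_subset_Ioc_self hr)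
    linarith
  -- the third derivative
  set G3 : ℝ → ℝ := fun r => ((N:ℝ)-1)/r^2 * deriv g r - ((N:ℝ)-1)/r * deriv (deriv g) r
      - α * r ^ (α-1) * f (g r) - r ^ α * (deriv f (g r) * deriv g r) with hG3def
  have hdG2 : ∀ r ∈ S, HasDerivAt (deriv (deriv g)) (G3 r) r := by
    intro r hr
    have hrne : r ≠ 0 := ne_of_gt hr.1
    have h1 : HasDerivAt (fun x : ℝ => ((N:ℝ)-1) / x * deriv g x)
        (((N:ℝ)-1) * (-(r^2)⁻¹) * deriv g r + ((N:ℝ)-1) / r * deriv (deriv g) r) r := by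
      have := ((hasDerivAt_inv hrne).const_mul ((N:ℝ)-1)).fun_mul (hdG1 r hr)
      simpa [div_eq_mul_inv] using this
    have h2 : HasDerivAt (fun x : ℝ => x ^ α * f (g x))
        (α * r ^ (α-1) * f (g r) + r ^ α * (deriv f (g r) * deriv g r)) r := by
      have hfd : HasDerivAt f (deriv f (g r)) (g r) :=
        ((hf.differentiable (by norm_num)) (g r)).hasDerivAt
      exact (Real.hasDerivAt_rpow_const (Or.inl hrne)).mul (hfd.comp r (hdg r hr))
    have h : HasDerivAt (fun x : ℝ => -(((N:ℝ)-1) / x * deriv g x) - x ^ α * f (g x)) (G3 r) r := by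
      have := (h1.fun_neg).fun_sub h2
      refine this.congr_deriv ?_
      rw [hG3def]
      field_simp
      ring
    apply h.congr_of_eventuallyEq
    filter_upwards [hmem r hr] with x hx using ode x hx
  have contG3 : ContinuousOn G3 S := by
    rw [hG3def]
    apply ContinuousOn.sub
    apply ContinuousOn.sub
    apply ContinuousOn.sub
    · exact (continuousOn_const.div ((continuous_pow 2).continuousOn)
        (fun x hx => pow_ne_zero 2 (ne_of_gt hx.1))).mul contG1
    · exact (continuousOn_const.div continuousOn_id (fun x hx => ne_of_gt hx.1)).mul contG2
    · exact (continuousOn_const.mul (contRpow _)).mul contfg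
    · exact (contRpow _).mul (contdfg.mul contG1)
  -- the test function φ = g' v
  set φ : ℝ → ℝ := fun r => deriv g r * v r with hφdef
  have hφsupp0 : Function.support φ ⊆ tsupport v := fun x hx => by
    by_contra h
    exact hx (by simp [hφdef, image_eq_zero_of_notMem_tsupport h])
  have hφts' : tsupport φ ⊆ S :=
    (closure_minimal hφsupp0 isClosed_closure).trans hvsub
  have hφc : ContDiff ℝ 1 φ := by
    rw [contDiff_iff_contDiffAt]
    intro x
    by_cases hx : x ∈ tsupport v
    · exact ((hG1.contDiffAt (hmem x (hvsub hx))).mul hv.contDiffAt)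
    · have hev : φ =ᶠ[nhds x] (fun _ => 0) := by
        filter_upwards [(isClosed_closure (s := Function.support v)).isOpen_compl.mem_nhds hx]
          with y hy
        simp [hφdef, image_eq_zero_of_notMem_tsupport hy]
      exact (contDiffAt_const (c := (0:ℝ))).congr_of_eventuallyEq hev
  have hφcs : HasCompactSupport φ := hvsupp.mul_left
  have hφlip : ∃ K, LipschitzWith K φ :=
    ContDiff.lipschitzWith_of_hasCompactSupport hφcs hφc (by norm_num)
  have hderivφ : ∀ r ∈ S, deriv φ r
      = deriv (deriv g) r * v r + deriv g r * deriv v r := fun r hr =>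
    deriv_mul ((hG1.differentiableOn (by norm_num)).differentiableAt (hmem r hr))
      ((hv.differentiable (by norm_num)) r)
  -- the four integrands
  set T1 : ℝ → ℝ := fun t => t ^ ((N:ℝ)-1) * ((deriv g t)^2 * (deriv v t)^2 -
      ((N:ℝ)-1) * (deriv g t)^2 * (v t)^2 / t^2) with hT1def
  set T2 : ℝ → ℝ := fun t => t ^ ((N:ℝ)-2+α) * f (g t) * deriv g t * (v t)^2 with hT2def
  set A : ℝ → ℝ := fun r => r ^ ((N:ℝ)-1) *
      ((deriv (deriv g) r * v r + deriv g r * deriv v r)^2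
        - r ^ α * deriv f (g r) * (deriv g r * v r)^2) with hAdef
  set Wd : ℝ → ℝ := fun r => -(((N:ℝ)-1) * r ^ ((N:ℝ)-2) * deriv g r * deriv (deriv g) r * (v r)^2
        + r ^ ((N:ℝ)-1) * (deriv (deriv g) r)^2 * (v r)^2
        + r ^ ((N:ℝ)-1) * deriv g r * G3 r * (v r)^2
        + r ^ ((N:ℝ)-1) * deriv g r * deriv (deriv g) r * (2 * v r * deriv v r)) with hWddef
  set W : ℝ → ℝ := fun r => -(r ^ ((N:ℝ)-1) * deriv g r * deriv (deriv g) r * (v r)^2) with hWdef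
  -- vanishing off [a,b]
  have hv0 : ∀ r ∉ Icc a b, v r = 0 := fun r hr =>
    image_eq_zero_of_notMem_tsupport (fun h => hr (hsub h))
  have hdv0 : ∀ r ∉ Icc a b, deriv v r = 0 := by
    intro r hr
    by_contra h
    exact hr (hsub (support_deriv_subset (Function.mem_support.2 h)))
  have hT1z : ∀ r ∉ Icc a b, T1 r = 0 := fun r hr => by
    simp [hT1def, hv0 r hr, hdv0 r hr]
  have hT2z : ∀ r ∉ Icc a b, T2 r = 0 := fun r hr => by simp [hT2def, hv0 r hr]
  have hAz : ∀ r ∉ Icc a b, A r = 0 := fun r hr => by simp [hAdef, hv0 r hr, hdv0 r hr]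
  have hWdz : ∀ r ∉ Icc a b, Wd r = 0 := fun r hr => by simp [hWddef, hv0 r hr, hdv0 r hr]
  have hWz : ∀ r ∉ Icc a b, W r = 0 := fun r hr => by simp [hWdef, hv0 r hr]
  -- continuity on S
  have contT1 : ContinuousOn T1 S := by
    rw [hT1def]
    apply (contRpow _).mul
    apply ContinuousOn.sub
    · exact (contG1.pow 2).mul ((contdv.continuousOn).pow 2)
    · exact ContinuousOn.div
        ((continuousOn_const.mul (contG1.pow 2)).mul ((hv.continuous.continuousOn).pow 2))
        ((continuous_pow 2).continuousOn) (fun x hx => pow_ne_zero 2 (ne_of_gt hx.1))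
  have contT2 : ContinuousOn T2 S := by
    rw [hT2def]
    exact (((contRpow _).mul contfg).mul contG1).mul ((hv.continuous.continuousOn).pow 2)
  have contA : ContinuousOn A S := by
    rw [hAdef]
    apply (contRpow _).mul
    apply ContinuousOn.sub
    · exact ((contG2.mul (hv.continuous.continuousOn)).add
        (contG1.mul (contdv.continuousOn))).pow 2
    · exact (((contRpow _).mul contdfg)).mul ((contG1.mul (hv.continuous.continuousOn)).pow 2)
  have contWd : ContinuousOn Wd S := by
    rw [hWddef]
    apply ContinuousOn.neg
    apply ContinuousOn.add
    apply ContinuousOn.add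
    apply ContinuousOn.add
    · exact (((continuousOn_const.mul (contRpow _)).mul contG1).mul contG2).mul
        ((hv.continuous.continuousOn).pow 2)
    · exact ((contRpow _).mul (contG2.pow 2)).mul ((hv.continuous.continuousOn).pow 2)
    · exact (((contRpow _).mul contG1).mul contG3).mul ((hv.continuous.continuousOn).pow 2)
    · exact (((contRpow _).mul contG1).mul contG2).mul
        ((continuousOn_const.mul (hv.continuous.continuousOn)).mul (contdv.continuousOn))
  -- integrability
  have intT1 : IntegrableOn T1 S := aux_integrableOn hIccS T1 contT1 hT1z
  have intT2 : IntegrableOn T2 S := aux_integrableOn hIccS T2 contT2 hT2z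
  have intA : IntegrableOn A S := aux_integrableOn hIccS A contA hAz
  have intWd : IntegrableOn Wd S := aux_integrableOn hIccS Wd contWd hWdz
  -- stability applied to φ
  have hstabA : 0 ≤ ∫ r in S, A r := by
    have h0 := hstab φ hφlip hφcs hφts'
    have heq : ∫ r in Set.Ioo (0:ℝ) 1,
        r ^ ((N : ℝ) - 1) * ((deriv φ r) ^ 2 - r ^ α * deriv f (g r) * (φ r) ^ 2)
        = ∫ r in S, A r := by
      apply setIntegral_congr_fun measurableSet_Ioo
      intro r hr
      rw [hAdef]
      simp only [hφdef]
      rw [hderivφ r hr]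
    rwa [heq] at h0
  -- derivative of W
  have hdW : ∀ r ∈ S, HasDerivAt W (Wd r) r := by
    intro r hr
    have hrne : r ≠ 0 := ne_of_gt hr.1
    have h1 : HasDerivAt (fun x : ℝ => x ^ ((N:ℝ)-1)) (((N:ℝ)-1) * r ^ (((N:ℝ)-1)-1)) r :=
      Real.hasDerivAt_rpow_const (Or.inl hrne)
    have hdv : HasDerivAt v (deriv v r) r := ((hv.differentiable (by norm_num)) r).hasDerivAt
    have h := (((h1.fun_mul (hdG1 r hr)).fun_mul (hdG2 r hr)).fun_mul (hdv.fun_pow 2)).fun_neg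
    rw [hWdef, hWddef]
    refine h.congr_deriv ?_
    rw [show ((N:ℝ)-1)-1 = (N:ℝ)-2 by ring]
    push_cast
    ring
  -- ∫ Wd = 0
  have hintWd0 : ∫ r in S, Wd r = 0 := by
    have h1 : ∫ r in S, Wd r = ∫ r in Icc a' b', Wd r := by
      apply setIntegral_eq_of_subset_of_forall_diff_eq_zero measurableSet_Ioo hIccS'
      intro x hx
      apply hWdz
      intro hmem'
      exact hx.2 ⟨le_trans (le_of_lt ha'a) hmem'.1, le_trans hmem'.2 (le_of_lt hbb')⟩
    have h2 : ∫ r in Icc a' b', Wd r = ∫ r in a'..b', Wd r := by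
      rw [integral_Icc_eq_integral_Ioc, intervalIntegral.integral_of_le ha'b']
    have h3 : ∫ r in a'..b', Wd r = W b' - W a' := by
      apply intervalIntegral.integral_eq_sub_of_hasDerivAt
      · intro x hx
        rw [uIcc_of_le ha'b'] at hx
        exact hdW x (hIccS' hx)
      · apply ContinuousOn.intervalIntegrable
        rw [uIcc_of_le ha'b']
        exact contWd.mono hIccS'
    have hWa' : W a' = 0 := hWz a' (fun h => absurd h.1 (not_le.2 ha'a))
    have hWb' : W b' = 0 := hWz b' (fun h => absurd h.2 (not_le.2 hbb'))
    rw [h1, h2, h3, hWa', hWb', sub_zero]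
  -- pointwise identity on S
  have hptwise : ∀ r ∈ S, T1 r + α * T2 r = A r + Wd r := by
    intro r hr
    have hr0 : (0:ℝ) < r := hr.1
    have hrne : r ≠ 0 := ne_of_gt hr0
    have e2 : r ^ ((N:ℝ)-2) = r ^ ((N:ℝ)-1) / r := by
      rw [show (N:ℝ)-2 = ((N:ℝ)-1)-1 by ring, Real.rpow_sub hr0, Real.rpow_one]
    have e3 : r ^ ((N:ℝ)-2+α) = r ^ ((N:ℝ)-1) * r ^ α / r := by
      rw [show (N:ℝ)-2+α = (((N:ℝ)-1)+α)-1 by ring, Real.rpow_sub hr0,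
        Real.rpow_add hr0, Real.rpow_one]
    have e4 : r ^ (α-1) = r ^ α / r := by
      rw [Real.rpow_sub hr0, Real.rpow_one]
    rw [hT1def, hT2def, hAdef, hWddef, hG3def]
    simp only [e2, e3, e4]
    field_simp
    ring
  -- combine
  have hsplit : (∫ r in S, T1 r) + α * (∫ r in S, T2 r) = (∫ r in S, A r) + (∫ r in S, Wd r) := by
    rw [← integral_const_mul, ← integral_add intT1 (intT2.const_mul α),
      ← integral_add intA intWd]
    exact setIntegral_congr_fun measurableSet_Ioo hptwise
  have hfinal : 0 ≤ (∫ r in S, T1 r) + α * (∫ r in S, T2 r) := by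
    rw [hsplit, hintWd0, add_zero]
    exact hstabA
  have hgoal1 : (∫ t in Set.Ioo (0:ℝ) 1,
      t ^ ((N : ℝ) - 2 + α) * f (g t) * deriv g t * (v t) ^ 2) = ∫ r in S, T2 r := rfl
  have hgoal2 : (∫ t in Set.Ioo (0:ℝ) 1,
      t ^ ((N : ℝ) - 1) * ((deriv g t) ^ 2 * (deriv v t) ^ 2 -
        ((N : ℝ) - 1) * (deriv g t) ^ 2 * (v t) ^ 2 / t ^ 2)) = ∫ r in S, T1 r := rfl
  rw [hgoal1, hgoal2]
  linarith
end
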